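/- arXiv:1801.10110 — 8 statements merged into one kernel-verified Lean document; each statement's English description precedes it below -/
import Mathlib

section
/- In the two-candidate P_1-voter model, if p̂_{11}/p̂_{12} < (p_{11}/p_{12})·((1/2 + ε)/(1/2 − ε)), then there exists N such that for all n ≥ N, P(Z′ > 0) ≤ exp(−2·(p̂_{11}·p̂_{12}/(p̂_{11} + p̂_{12}))²·√n); i.e., a voter of class P_1 perceives a_2 as winner with probability tending to 0 as n → ∞, so she is not surprised with high probability. -/
open MeasureTheory ProbabilityTheory Real Filter Finset

/-!
The increments `Y i` take only the three values `1 / p̂₁₂`, `-1 / p̂₁₁` and `0`, and the hypothesis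
on `p̂₁₁ / p̂₁₂` says exactly that their common mean is negative. The moment generating function
equals `1` at `0` and has the mean as its derivative there, so it drops below `1` at some `t > 0`;
the Chernoff bound then makes `P(Z' > 0)` decay geometrically in `n`, which beats `exp (-c √n)` for
every `c`.
-/

section FiniteValued

variable {Ω β E : Type*} [MeasurableSpace Ω] {μ : Measure Ω} {X : Ω → β} {s : Finset β}
  [NormedAddCommGroup E]

lemma comp_ae_eq_sum_indicator (hs : ∀ᵐ ω ∂μ, X ω ∈ s) (f : β → E) :
    (fun ω ↦ f (X ω)) =ᵐ[μ] fun ω ↦ ∑ x ∈ s, {ω | X ω = x}.indicator (fun _ ↦ f x) ω := by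
  filter_upwards [hs] with ω hω
  rw [sum_eq_single_of_mem (f := fun x ↦ {ω | X ω = x}.indicator (fun _ ↦ f x) ω) (X ω) hω
    fun x _ hx ↦ Set.indicator_of_notMem (Ne.symm hx) _]
  exact (Set.indicator_of_mem rfl _).symm

variable [MeasurableSpace β] [MeasurableSingletonClass β]

lemma ae_mem_of_one_le_sum_measure [IsProbabilityMeasure μ] (hX : Measurable X)
    (hs : 1 ≤ ∑ x ∈ s, μ {ω | X ω = x}) : ∀ᵐ ω ∂μ, X ω ∈ s := by
  change 1 ≤ ∑ x ∈ s, μ (X ⁻¹' {x}) at hs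
  rw [sum_measure_preimage_singleton s fun x _ ↦ hX (measurableSet_singleton x)] at hs
  refine (ae_iff_measure_eq (hX s.measurableSet).nullMeasurableSet).2 ?_
  rw [measure_univ]
  exact le_antisymm prob_le_one hs

lemma integrable_comp_of_ae_mem [IsFiniteMeasure μ] (hX : Measurable X)
    (hs : ∀ᵐ ω ∂μ, X ω ∈ s) (f : β → E) : Integrable (fun ω ↦ f (X ω)) μ :=
  (integrable_finsetSum s fun x _ ↦
    (integrable_const (f x)).indicator (hX (measurableSet_singleton x))).congr
    (comp_ae_eq_sum_indicator hs f).symm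

variable [NormedSpace ℝ E] [CompleteSpace E] [IsFiniteMeasure μ]

lemma integral_comp_eq_sum_of_ae_mem (hX : Measurable X) (hs : ∀ᵐ ω ∂μ, X ω ∈ s) (f : β → E) :
    ∫ ω, f (X ω) ∂μ = ∑ x ∈ s, μ.real {ω | X ω = x} • f x := by
  rw [integral_congr_ae (comp_ae_eq_sum_indicator hs f), integral_finsetSum]
  · exact sum_congr rfl fun x _ ↦ integral_indicator_const _ (hX (measurableSet_singleton x))
  · exact fun x _ ↦ (integrable_const (f x)).indicator (hX (measurableSet_singleton x))

lemma integral_comp_eq_of_measureReal_eq {X' : Ω → β} (hX : Measurable X) (hX' : Measurable X')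
    (hs : ∀ᵐ ω ∂μ, X ω ∈ s) (hs' : ∀ᵐ ω ∂μ, X' ω ∈ s)
    (hlaw : ∀ x ∈ s, μ.real {ω | X ω = x} = μ.real {ω | X' ω = x}) (f : β → E) :
    ∫ ω, f (X ω) ∂μ = ∫ ω, f (X' ω) ∂μ := by
  rw [integral_comp_eq_sum_of_ae_mem hX hs, integral_comp_eq_sum_of_ae_mem hX' hs']
  exact sum_congr rfl fun x hx ↦ by rw [hlaw x hx]

end FiniteValued

lemma HasDerivAt.exists_gt_lt_of_neg {f : ℝ → ℝ} {f' x : ℝ} (hf : HasDerivAt f f' x)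
    (hf' : f' < 0) : ∃ y > x, f y < f x := by
  obtain ⟨y, hslope, hxy⟩ := ((hf.hasDerivWithinAt (s := Set.Ioi x)).limsup_slope_le'
    (lt_irrefl x) hf' |>.and self_mem_nhdsWithin).exists
  refine ⟨y, hxy, ?_⟩
  rw [slope_def_field, div_neg_iff] at hslope
  rcases hslope with ⟨-, hneg⟩ | ⟨hneg, -⟩
  · linarith [show x < y from hxy]
  · linarith

lemma eventually_mul_sqrt_add_le_mul {δ : ℝ} (hδ : 0 < δ) (C D : ℝ) :
    ∀ᶠ x in atTop, C * √x + D ≤ δ * x := by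
  filter_upwards [eventually_ge_atTop ((C ^ 2 + 2 * D * δ) / δ ^ 2), eventually_ge_atTop 0]
    with x hx hx0
  rw [div_le_iff₀ (by positivity)] at hx
  have hsq : δ ^ 2 * x = (δ * √x) ^ 2 := by rw [mul_pow, sq_sqrt hx0]
  have hamgm : 2 * δ * (C * √x) ≤ δ ^ 2 * x + C ^ 2 := by
    nlinarith [sq_nonneg (δ * √x - C)]
  refine le_of_mul_le_mul_left ?_ (by positivity : 0 < 2 * δ)
  nlinarith

lemma eventually_pow_sub_one_le_exp_mul_sqrt {m : ℝ} (hm0 : 0 < m) (hm1 : m < 1) (C : ℝ) :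
    ∀ᶠ n : ℕ in atTop, m ^ (n - 1) ≤ exp (C * √n) := by
  have hδ : 0 < -log m := neg_pos.2 (log_neg hm0 hm1)
  filter_upwards [tendsto_natCast_atTop_atTop.eventually
    (eventually_mul_sqrt_add_le_mul hδ (-C) (-log m)), eventually_ge_atTop 1] with n hn hn1
  rw [← exp_log (pow_pos hm0 _), exp_le_exp, log_pow, Nat.cast_sub hn1, Nat.cast_one]
  linarith

section Chernoff

variable {Ω ι : Type*} [MeasurableSpace Ω] {μ : Measure Ω} [IsProbabilityMeasure μ]

lemma exists_pos_mgf_lt_one {X : Ω → ℝ} (hint : ∀ t, Integrable (fun ω ↦ exp (t * X ω)) μ)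
    (hmean : μ[X] < 0) : ∃ t > 0, mgf X μ t < 1 := by
  have hinterior : (0 : ℝ) ∈ interior (integrableExpSet X μ) := by
    simp [integrableExpSet, hint]
  have hderiv := hasDerivAt_mgf hinterior
  simp only [zero_mul, exp_zero, mul_one] at hderiv
  simpa [mgf_zero] using hderiv.exists_gt_lt_of_neg hmean

lemma measure_sum_ge_le_exp_mul_pow {Y : ι → Ω → ℝ} (hmeas : ∀ i, Measurable (Y i))
    (hindep : iIndepFun Y μ) {t m : ℝ} (ht : 0 ≤ t)
    (hint : ∀ i, Integrable (fun ω ↦ exp (t * Y i ω)) μ) (hmgf : ∀ i, mgf (Y i) μ t = m)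
    (s : Finset ι) (c : ℝ) :
    μ.real {ω | c ≤ ∑ i ∈ s, Y i ω} ≤ exp (-t * c) * m ^ #s := by
  have hchernoff := measure_ge_le_exp_mul_mgf (X := ∑ i ∈ s, Y i) c ht
    (hindep.integrable_exp_mul_sum hmeas fun i _ ↦ hint i)
  rw [hindep.mgf_sum hmeas, prod_congr rfl fun i _ ↦ hmgf i, prod_const] at hchernoff
  simpa only [Finset.sum_apply] using hchernoff

lemma eventually_measure_sum_range_gt_le_exp_mul_sqrt {Y : ℕ → Ω → ℝ}
    (hmeas : ∀ i, Measurable (Y i)) (hindep : iIndepFun Y μ)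
    (hint : ∀ i t, Integrable (fun ω ↦ exp (t * Y i ω)) μ) (hmgf : ∀ i, mgf (Y i) μ = mgf (Y 0) μ)
    (hmean : μ[Y 0] < 0) {c : ℝ} (hc : 0 ≤ c) (C : ℝ) :
    ∀ᶠ n : ℕ in atTop,
      μ {ω | c < ∑ i ∈ range (n - 1), Y i ω} ≤ ENNReal.ofReal (exp (C * √n)) := by
  obtain ⟨t, ht, hlt⟩ := exists_pos_mgf_lt_one (hint 0) hmean
  filter_upwards [eventually_pow_sub_one_le_exp_mul_sqrt (mgf_pos (hint 0 t)) hlt C] with n hn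
  calc μ {ω | c < ∑ i ∈ range (n - 1), Y i ω}
      ≤ μ {ω | c ≤ ∑ i ∈ range (n - 1), Y i ω} :=
        measure_mono <| Set.ofPred_subset_ofPred.2 fun _ ↦ le_of_lt
    _ = ENNReal.ofReal (μ.real {ω | c ≤ ∑ i ∈ range (n - 1), Y i ω}) := by
      rw [ofReal_measureReal]
    _ ≤ ENNReal.ofReal (mgf (Y 0) μ t ^ (n - 1)) := by
      refine ENNReal.ofReal_le_ofReal ((measure_sum_ge_le_exp_mul_pow hmeas hindep ht.le
        (fun i ↦ hint i t) (fun i ↦ congrFun (hmgf i) t) _ c).trans ?_)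
      rw [card_range]
      refine mul_le_of_le_one_left (pow_nonneg mgf_nonneg _) (exp_le_one_iff.2 ?_)
      rw [neg_mul]
      exact neg_nonpos.2 (mul_nonneg ht.le hc)
    _ ≤ ENNReal.ofReal (exp (C * √n)) := ENNReal.ofReal_le_ofReal hn

end Chernoff

lemma ENNReal.one_le_ofReal_add_ofReal_add_ofReal_sub (a b : ℝ) :
    1 ≤ ENNReal.ofReal a + ENNReal.ofReal b + ENNReal.ofReal (1 - a - b) := by
  have hsum : a + b + (1 - a - b) = 1 := by ring
  calc 1 = ENNReal.ofReal (a + b + (1 - a - b)) := by rw [hsum, ENNReal.ofReal_one]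
    _ ≤ _ := ENNReal.ofReal_add_le.trans (by gcongr; exact ENNReal.ofReal_add_le)

lemma increment_mean_neg {ε p11 p12 phat11 phat12 : ℝ} (hε' : ε < 1/2) (hp12 : 0 < p12)
    (hphat11 : 0 < phat11) (hphat12 : 0 < phat12)
    (hcond : phat11 / phat12 < (p11 / p12) * ((1/2 + ε) / (1/2 - ε))) :
    (1/2 - ε) * p12 * (1 / phat12) + (1/2 + ε) * p11 * (-1 / phat11) < 0 := by
  rw [div_mul_div_comm, div_lt_div_iff₀ hphat12 (mul_pos hp12 (by linarith))] at hcond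
  have hkey : (1/2 - ε) * p12 / phat12 < (1/2 + ε) * p11 / phat11 := by
    rw [div_lt_div_iff₀ hphat12 hphat11]
    linarith
  calc _ = (1/2 - ε) * p12 / phat12 - (1/2 + ε) * p11 / phat11 := by ring
    _ < 0 := sub_neg.2 hkey

theorem surprise_two_candidates_P1_not_surprised_general
    {Ω : Type*} [MeasurableSpace Ω] (μ : Measure Ω) [IsProbabilityMeasure μ]
    (ε : ℝ) (hε : 0 < ε) (hε' : ε < 1/2)
    (p11 p12 phat11 phat12 : ℝ)
    (hp11 : 0 < p11) (hp12 : 0 < p12)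
    (hphat11 : 0 < phat11)
    (hphat12 : 0 < phat12)
    (Y : ℕ → Ω → ℝ) (hmeas : ∀ i, Measurable (Y i))
    (hindep : iIndepFun Y μ)
    (hY1 : ∀ i, μ {ω | Y i ω = 1/phat12} = ENNReal.ofReal ((1/2 - ε) * p12))
    (hY2 : ∀ i, μ {ω | Y i ω = -1/phat11} = ENNReal.ofReal ((1/2 + ε) * p11))
    (hY0 : ∀ i, μ {ω | Y i ω = 0} =
      ENNReal.ofReal (1 - (1/2 - ε) * p12 - (1/2 + ε) * p11))
    (hcond : phat11 / phat12 < (p11 / p12) * ((1/2 + ε) / (1/2 - ε))) :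
    ∃ N : ℕ, ∀ n : ℕ, N ≤ n →
      μ {ω | 0 < (∑ i ∈ Finset.range (n - 1), Y i ω) - 1} ≤
        ENNReal.ofReal
          (Real.exp (-2 * (phat11 * phat12 / (phat11 + phat12))^2 * Real.sqrt n)) := by
  set s : Finset ℝ := {1 / phat12, -1 / phat11, 0}
  have hb : 0 < 1 / phat12 := by positivity
  have ha : -1 / phat11 < 0 := div_neg_of_neg_of_pos (by norm_num) hphat11
  have hnotMem : 1 / phat12 ∉ ({-1 / phat11, 0} : Finset ℝ) := by
    simp only [mem_insert, mem_singleton, not_or]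
    exact ⟨(ha.trans hb).ne', hb.ne'⟩
  have hvalues : ∀ i, ∀ᵐ ω ∂μ, Y i ω ∈ s := fun i ↦ ae_mem_of_one_le_sum_measure (hmeas i) <| by
    rw [sum_insert hnotMem, sum_pair ha.ne, hY1, hY2, hY0, ← add_assoc]
    exact ENNReal.one_le_ofReal_add_ofReal_add_ofReal_sub _ _
  have hlaw : ∀ i, ∀ x ∈ s, μ.real {ω | Y i ω = x} = μ.real {ω | Y 0 ω = x} := by
    simp only [s, mem_insert, mem_singleton]
    rintro i x (rfl | rfl | rfl) <;> simp only [measureReal_def, hY1, hY2, hY0]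
  have hmean : μ[Y 0] < 0 := by
    rw [integral_comp_eq_sum_of_ae_mem (hmeas 0) (hvalues 0) (fun x ↦ x), sum_insert hnotMem,
      sum_pair ha.ne]
    simp only [measureReal_def, hY1, hY2, smul_eq_mul, mul_zero, add_zero,
      ENNReal.toReal_ofReal (mul_nonneg (by linarith : (0 : ℝ) ≤ 1/2 - ε) hp12.le),
      ENNReal.toReal_ofReal (mul_nonneg (by linarith : (0 : ℝ) ≤ 1/2 + ε) hp11.le)]
    exact increment_mean_neg hε' hp12 hphat11 hphat12 hcond
  simp_rw [sub_pos]
  exact eventually_atTop.1 <| eventually_measure_sum_range_gt_le_exp_mul_sqrt hmeas hindep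
    (fun i t ↦ integrable_comp_of_ae_mem (hmeas i) (hvalues i) (fun x ↦ exp (t * x)))
    (fun i ↦ funext fun t ↦ integral_comp_eq_of_measureReal_eq (hmeas i) (hmeas 0) (hvalues i)
      (hvalues 0) (hlaw i) (fun x ↦ exp (t * x)))
    hmean zero_le_one _

/-- Two-candidate model, voter `v ∈ P₁`.  If
`p̂₁₁/p̂₁₂ < (p₁₁/p₁₂)·((1/2+ε)/(1/2-ε))` then there is `N` such that for all
`n ≥ N`, `P(Z' > 0) ≤ exp(-2 (p̂₁₁ p̂₁₂/(p̂₁₁+p̂₁₂))² √n)`, i.e. the voter is not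
surprised with high probability. -/
theorem surprise_two_candidates_P1_not_surprised
    {Ω : Type*} [MeasurableSpace Ω] (μ : Measure Ω) [IsProbabilityMeasure μ]
    (ε : ℝ) (hε : 0 < ε) (hε' : ε < 1/2)
    (p11 p12 phat11 phat12 : ℝ)
    (hp11 : 0 < p11) (hp11' : p11 ≤ 1) (hp12 : 0 < p12) (hp12' : p12 ≤ 1)
    (hphat11 : 0 < phat11) (hphat11' : phat11 ≤ 1)
    (hphat12 : 0 < phat12) (hphat12' : phat12 ≤ 1)
    (Y : ℕ → Ω → ℝ) (hmeas : ∀ i, Measurable (Y i))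
    (hindep : iIndepFun Y μ)
    (hY1 : ∀ i, μ {ω | Y i ω = 1/phat12} = ENNReal.ofReal ((1/2 - ε) * p12))
    (hY2 : ∀ i, μ {ω | Y i ω = -1/phat11} = ENNReal.ofReal ((1/2 + ε) * p11))
    (hY0 : ∀ i, μ {ω | Y i ω = 0} =
      ENNReal.ofReal (1 - (1/2 - ε) * p12 - (1/2 + ε) * p11))
    (hcond : phat11 / phat12 < (p11 / p12) * ((1/2 + ε) / (1/2 - ε))) :
    ∃ N : ℕ, ∀ n : ℕ, N ≤ n →
      μ {ω | 0 < (∑ i ∈ Finset.range (n - 1), Y i ω) - 1} ≤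
        ENNReal.ofReal
          (Real.exp (-2 * (phat11 * phat12 / (phat11 + phat12))^2 * Real.sqrt n)) :=
  surprise_two_candidates_P1_not_surprised_general μ ε hε hε' p11 p12 phat11 phat12 hp11 hp12
    hphat11 hphat12 Y hmeas hindep hY1 hY2 hY0 hcond
end

section
/- In the two-candidate P_2-voter model, if p̂_{22}/p̂_{21} < (p_{22}/p_{21})·((1/2 − ε)/(1/2 + ε)), then there exists N such that for all n ≥ N, P(Z > 0) ≥ 1 − 2·exp(−2·(p̂_{22}·p̂_{21}/(p̂_{22} + p̂_{21}))²·√n); i.e., a voter of class P_2 perceives a_2 as winner (and hence is surprised when a_1 truly wins) with probability tending to 1 as n → ∞. -/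
/-!
Each `Y i` takes the three values `1/p̂₂₂`, `-1/p̂₂₁`, `0`, and the hypothesis on the estimates says
exactly that its mean `(1/2 - ε) p₂₂ / p̂₂₂ - (1/2 + ε) p₂₁ / p̂₂₁` is positive. The moment generating
function of `Y i` equals `1` at `0` and has the mean as derivative there, so it takes a value
`q < 1` at some `u < 0`; the Chernoff bound at `u` then gives `P(∑_{i<k} Y i ≤ 0) ≤ q ^ k`, and a
geometric tail is eventually below `exp(-C √n)` for every `C`.
-/

open MeasureTheory ProbabilityTheory Filter Topology

section FiniteSupport

variable {Ω α : Type*} [MeasurableSpace Ω] {μ : Measure Ω} {X : Ω → α} {s : Finset α}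

theorem ae_eq_sum_indicator_preimage_singleton [DecidableEq α] (hs : ∀ᵐ ω ∂μ, X ω ∈ s)
    (f : α → ℝ) :
    (fun ω => f (X ω)) =ᵐ[μ] fun ω => ∑ x ∈ s, (X ⁻¹' {x}).indicator (fun _ => f x) ω := by
  filter_upwards [hs] with ω hω
  simp [Set.indicator, hω]

variable [MeasurableSpace α] [MeasurableSingletonClass α]

theorem integrable_comp_of_ae_mem_finset [IsFiniteMeasure μ] (hX : Measurable X)
    (hs : ∀ᵐ ω ∂μ, X ω ∈ s) (f : α → ℝ) : Integrable (fun ω => f (X ω)) μ := by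
  classical
  refine (integrable_finsetSum s fun x _ => ?_).congr
    (ae_eq_sum_indicator_preimage_singleton hs f).symm
  exact (integrable_const _).indicator (hX (measurableSet_singleton x))

theorem integral_comp_eq_sum_of_ae_mem_finset [IsFiniteMeasure μ] (hX : Measurable X)
    (hs : ∀ᵐ ω ∂μ, X ω ∈ s) (f : α → ℝ) :
    ∫ ω, f (X ω) ∂μ = ∑ x ∈ s, μ.real (X ⁻¹' {x}) * f x := by
  classical
  rw [integral_congr_ae (ae_eq_sum_indicator_preimage_singleton hs f), integral_finsetSum]
  · exact Finset.sum_congr rfl fun x _ => by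
      rw [integral_indicator_const _ (hX (measurableSet_singleton x)), smul_eq_mul]
  · exact fun x _ => (integrable_const _).indicator (hX (measurableSet_singleton x))

theorem ae_mem_finset_of_sum_measure_preimage_singleton [IsProbabilityMeasure μ]
    (hX : Measurable X) (h : ∑ x ∈ s, μ (X ⁻¹' {x}) = 1) : ∀ᵐ ω ∂μ, X ω ∈ s := by
  rw [sum_measure_preimage_singleton s fun x _ => hX (measurableSet_singleton x)] at h
  exact (ae_iff_measure_eq (hX s.measurableSet).nullMeasurableSet).mpr (h.trans measure_univ.symm)

end FiniteSupport

theorem HasDerivAt.exists_lt_lt_of_pos {f : ℝ → ℝ} {f' x : ℝ} (hf : HasDerivAt f f' x)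
    (hf' : 0 < f') : ∃ y < x, f y < f x := by
  have hslope : Tendsto (slope f x) (𝓝[<] x) (𝓝 f') :=
    (hasDerivAt_iff_tendsto_slope.mp hf).mono_left (nhdsLT_le_nhdsNE x)
  obtain ⟨y, hy, hyx⟩ :=
    ((hslope.eventually (eventually_gt_nhds hf')).and self_mem_nhdsWithin).exists
  exact ⟨y, hyx, (slope_pos_iff_gt hyx).mp hy⟩

theorem hasDerivAt_sum_mul_exp_mul {ι : Type*} [Fintype ι] (p v : ι → ℝ) :
    HasDerivAt (fun t => ∑ j, p j * Real.exp (t * v j)) (∑ j, p j * v j) 0 := by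
  refine HasDerivAt.fun_sum fun j _ => ?_
  simpa using (((hasDerivAt_id (0 : ℝ)).mul_const (v j)).exp).const_mul (p j)

section FiniteDistribution

variable {Ω ι : Type*} [MeasurableSpace Ω] {μ : Measure Ω} [IsProbabilityMeasure μ]
  [Fintype ι] {v : ι → ℝ} {p : ι → ℝ} {X : Ω → ℝ}

theorem ae_mem_map_univ_of_measure_eq_ofReal (hX : Measurable X) (hv : Function.Injective v)
    (hp : ∀ j, 0 ≤ p j) (hp1 : ∑ j, p j = 1)
    (hXv : ∀ j, μ {ω | X ω = v j} = ENNReal.ofReal (p j)) :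
    ∀ᵐ ω ∂μ, X ω ∈ Finset.univ.map ⟨v, hv⟩ := by
  refine ae_mem_finset_of_sum_measure_preimage_singleton hX ?_
  rw [Finset.sum_map]
  simp only [Function.Embedding.coeFn_mk, Set.preimage, Set.mem_singleton_iff, hXv]
  rw [← ENNReal.ofReal_sum_of_nonneg fun j _ => hp j, hp1, ENNReal.ofReal_one]

theorem mgf_eq_sum_of_measure_eq_ofReal (hX : Measurable X) (hv : Function.Injective v)
    (hp : ∀ j, 0 ≤ p j) (hp1 : ∑ j, p j = 1)
    (hXv : ∀ j, μ {ω | X ω = v j} = ENNReal.ofReal (p j)) (t : ℝ) :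
    mgf X μ t = ∑ j, p j * Real.exp (t * v j) := by
  rw [mgf, integral_comp_eq_sum_of_ae_mem_finset hX
    (ae_mem_map_univ_of_measure_eq_ofReal hX hv hp hp1 hXv) (fun x => Real.exp (t * x)),
    Finset.sum_map]
  refine Finset.sum_congr rfl fun j _ => ?_
  simp only [Function.Embedding.coeFn_mk, measureReal_def, Set.preimage, Set.mem_singleton_iff,
    hXv, ENNReal.toReal_ofReal (hp j)]

theorem exists_measureReal_sum_nonpos_le_pow {Y : ℕ → Ω → ℝ} (hmeas : ∀ i, Measurable (Y i))
    (hindep : iIndepFun Y μ) (hv : Function.Injective v) (hp : ∀ j, 0 ≤ p j)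
    (hp1 : ∑ j, p j = 1) (hY : ∀ i j, μ {ω | Y i ω = v j} = ENNReal.ofReal (p j))
    (hmean : 0 < ∑ j, p j * v j) :
    ∃ q, 0 ≤ q ∧ q < 1 ∧ ∀ k, μ.real {ω | ∑ i ∈ Finset.range k, Y i ω ≤ 0} ≤ q ^ k := by
  set G : ℝ → ℝ := fun t => ∑ j, p j * Real.exp (t * v j)
  have hmgf : ∀ i t, mgf (Y i) μ t = G t := fun i =>
    mgf_eq_sum_of_measure_eq_ofReal (hmeas i) hv hp hp1 (hY i)
  have hG0 : G 0 = 1 := by simp [G, hp1]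
  obtain ⟨u, hu, hGu⟩ := (hasDerivAt_sum_mul_exp_mul p v).exists_lt_lt_of_pos hmean
  refine ⟨G u, hmgf 0 u ▸ mgf_nonneg, hG0 ▸ hGu, fun k => ?_⟩
  have hint : Integrable (fun ω => Real.exp (u * (∑ i ∈ Finset.range k, Y i) ω)) μ :=
    hindep.integrable_exp_mul_sum hmeas fun i _ => integrable_comp_of_ae_mem_finset (hmeas i)
      (ae_mem_map_univ_of_measure_eq_ofReal (hmeas i) hv hp hp1 (hY i))
      (fun y => Real.exp (u * y))
  calc μ.real {ω | ∑ i ∈ Finset.range k, Y i ω ≤ 0}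
      = μ.real {ω | (∑ i ∈ Finset.range k, Y i) ω ≤ 0} := by simp only [Finset.sum_apply]
    _ ≤ Real.exp (-u * 0) * mgf (∑ i ∈ Finset.range k, Y i) μ u :=
      measure_le_le_exp_mul_mgf 0 hu.le hint
    _ = G u ^ k := by simp [hindep.mgf_sum hmeas, hmgf]

end FiniteDistribution

theorem ofReal_one_sub_le_measure_lt {Ω : Type*} [MeasurableSpace Ω] {μ : Measure Ω}
    [IsProbabilityMeasure μ] {f : Ω → ℝ} (hf : Measurable f) {c r : ℝ}
    (h : μ.real {ω | f ω ≤ c} ≤ r) : ENNReal.ofReal (1 - r) ≤ μ {ω | c < f ω} := by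
  have hcompl : μ.real {ω | c < f ω} = 1 - μ.real {ω | f ω ≤ c} := by
    rw [← probReal_compl_eq_one_sub (measurableSet_le hf measurable_const)]
    simp only [Set.compl_ofPred, not_le]
  rw [← ofReal_measureReal]
  exact ENNReal.ofReal_le_ofReal (by linarith)

theorem eventually_mul_sqrt_le_mul_sub_one (C : ℝ) {δ : ℝ} (hδ : 0 < δ) :
    ∀ᶠ x : ℝ in atTop, C * √x ≤ δ * (x - 1) := by
  filter_upwards [Real.tendsto_sqrt_atTop.eventually_ge_atTop (2 * C / δ),
    eventually_ge_atTop 2] with x hsqrt hx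
  have hxx : √x * √x = x := Real.mul_self_sqrt (by linarith)
  rw [div_le_iff₀ hδ] at hsqrt
  nlinarith [Real.sqrt_nonneg x]

theorem eventually_pow_pred_le_exp_neg_mul_sqrt {q : ℝ} (hq0 : 0 ≤ q) (hq1 : q < 1) (C : ℝ) :
    ∀ᶠ n : ℕ in atTop, q ^ (n - 1) ≤ Real.exp (-C * √n) := by
  filter_upwards [tendsto_natCast_atTop_atTop.eventually
    (eventually_mul_sqrt_le_mul_sub_one C (sub_pos.mpr hq1)), eventually_ge_atTop 1] with n hn hn1
  calc q ^ (n - 1) ≤ Real.exp (-(1 - q)) ^ (n - 1) :=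
        pow_le_pow_left₀ hq0 (by linarith [Real.add_one_le_exp (-(1 - q))]) _
    _ = Real.exp (-((1 - q) * ((n : ℝ) - 1))) := by
        rw [← Real.exp_nat_mul, Nat.cast_sub hn1, Nat.cast_one]; ring_nf
    _ ≤ Real.exp (-C * √n) := Real.exp_le_exp.mpr (by linarith)

theorem div_sub_div_pos_of_div_lt_div {x y a b : ℝ} (hx : 0 < x) (hy : 0 < y) (hb : 0 < b)
    (h : x / y < a / b) : 0 < a / x - b / y := by
  rw [div_lt_div_iff₀ hy hb] at h
  rw [sub_pos, div_lt_div_iff₀ hy hx]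
  linarith

theorem injective_one_div_neg_one_div_zero {x y : ℝ} (hx : 0 < x) (hy : 0 < y) :
    Function.Injective ![1 / x, -1 / y, 0] := by
  have : 0 < x⁻¹ := inv_pos.mpr hx
  have : -1 / y < 0 := div_neg_of_neg_of_pos (by norm_num) hy
  intro i j h
  fin_cases i <;> fin_cases j <;> simp at h ⊢ <;> linarith

theorem surprise_two_candidates_P2_surprised_general
    {Ω : Type*} [MeasurableSpace Ω] (μ : Measure Ω) [IsProbabilityMeasure μ]
    (ε : ℝ) (hε : 0 < ε) (hε' : ε < 1/2)
    (p22 p21 phat22 phat21 : ℝ)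
    (hp22 : 0 < p22) (hp22' : p22 ≤ 1) (hp21 : 0 < p21) (hp21' : p21 ≤ 1)
    (hphat22 : 0 < phat22)
    (hphat21 : 0 < phat21)
    (Y : ℕ → Ω → ℝ) (hmeas : ∀ i, Measurable (Y i))
    (hindep : iIndepFun Y μ)
    (hY1 : ∀ i, μ {ω | Y i ω = 1/phat22} = ENNReal.ofReal ((1/2 - ε) * p22))
    (hY2 : ∀ i, μ {ω | Y i ω = -1/phat21} = ENNReal.ofReal ((1/2 + ε) * p21))
    (hY0 : ∀ i, μ {ω | Y i ω = 0} =
      ENNReal.ofReal (1 - (1/2 - ε) * p22 - (1/2 + ε) * p21))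
    (hcond : phat22 / phat21 < (p22 / p21) * ((1/2 - ε) / (1/2 + ε))) :
    ∃ N : ℕ, ∀ n : ℕ, N ≤ n →
      μ {ω | 0 < 1 + ∑ i ∈ Finset.range (n - 1), Y i ω} ≥
        ENNReal.ofReal
          (1 - 2 * Real.exp (-2 * (phat22 * phat21 / (phat22 + phat21))^2 * Real.sqrt n)) := by
  set a := (1/2 - ε) * p22
  set b := (1/2 + ε) * p21
  have ha : 0 ≤ a := mul_nonneg (by linarith) hp22.le
  have hb : 0 ≤ b := mul_nonneg (by linarith) hp21.le
  have hab : 0 ≤ 1 - a - b := by simp only [a, b]; nlinarith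
  have hmargin : 0 < a / phat22 - b / phat21 :=
    div_sub_div_pos_of_div_lt_div hphat22 hphat21 (by positivity)
      (by rwa [mul_comm, div_mul_div_comm] at hcond)
  obtain ⟨q, hq0, hq1, hq⟩ := exists_measureReal_sum_nonpos_le_pow (p := ![a, b, 1 - a - b])
    hmeas hindep (injective_one_div_neg_one_div_zero hphat22 hphat21) (by simp [Fin.forall_fin_succ, ha, hb, hab]) (by simp [Fin.sum_univ_three])
    (fun i j => by fin_cases j; exacts [hY1 i, hY2 i, hY0 i])
    (by simpa [Fin.sum_univ_three, div_eq_mul_inv, sub_eq_add_neg] using hmargin)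
  obtain ⟨N, hN⟩ := eventually_atTop.mp (eventually_pow_pred_le_exp_neg_mul_sqrt hq0 hq1
    (2 * (phat22 * phat21 / (phat22 + phat21)) ^ 2))
  refine ⟨N, fun n hn => ofReal_one_sub_le_measure_lt
    (measurable_const.add (Finset.measurable_sum _ fun i _ => hmeas i)) ?_⟩
  calc μ.real {ω | 1 + ∑ i ∈ Finset.range (n - 1), Y i ω ≤ 0}
      ≤ μ.real {ω | ∑ i ∈ Finset.range (n - 1), Y i ω ≤ 0} :=
        measureReal_mono fun ω (h : _ ≤ (0 : ℝ)) => show _ ≤ (0 : ℝ) by linarith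
    _ ≤ q ^ (n - 1) := hq (n - 1)
    _ ≤ Real.exp (-(2 * (phat22 * phat21 / (phat22 + phat21)) ^ 2) * √n) := hN n hn
    _ ≤ 2 * Real.exp (-2 * (phat22 * phat21 / (phat22 + phat21)) ^ 2 * √n) := by
        rw [neg_mul (2 : ℝ)]
        exact le_mul_of_one_le_left (Real.exp_pos _).le one_le_two

/-- Two-candidate model, voter `v ∈ P₂`.  `Y i` are i.i.d. with
`P(Y i = 1/p̂₂₂) = (1/2 - ε) p₂₂`, `P(Y i = -1/p̂₂₁) = (1/2 + ε) p₂₁`, and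
`P(Y i = 0)` the remaining mass; `Z = 1 + ∑_{i<n-1} Y i`.  If
`p̂₂₂/p̂₂₁ < (p₂₂/p₂₁)·((1/2-ε)/(1/2+ε))` then there is `N` such that for all
`n ≥ N`, `P(Z > 0) ≥ 1 - 2 exp(-2 (p̂₂₂ p̂₂₁/(p̂₂₂+p̂₂₁))² √n)`. -/
theorem surprise_two_candidates_P2_surprised
    {Ω : Type*} [MeasurableSpace Ω] (μ : Measure Ω) [IsProbabilityMeasure μ]
    (ε : ℝ) (hε : 0 < ε) (hε' : ε < 1/2)
    (p22 p21 phat22 phat21 : ℝ)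
    (hp22 : 0 < p22) (hp22' : p22 ≤ 1) (hp21 : 0 < p21) (hp21' : p21 ≤ 1)
    (hphat22 : 0 < phat22) (hphat22' : phat22 ≤ 1)
    (hphat21 : 0 < phat21) (hphat21' : phat21 ≤ 1)
    (Y : ℕ → Ω → ℝ) (hmeas : ∀ i, Measurable (Y i))
    (hindep : iIndepFun Y μ)
    (hY1 : ∀ i, μ {ω | Y i ω = 1/phat22} = ENNReal.ofReal ((1/2 - ε) * p22))
    (hY2 : ∀ i, μ {ω | Y i ω = -1/phat21} = ENNReal.ofReal ((1/2 + ε) * p21))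
    (hY0 : ∀ i, μ {ω | Y i ω = 0} =
      ENNReal.ofReal (1 - (1/2 - ε) * p22 - (1/2 + ε) * p21))
    (hcond : phat22 / phat21 < (p22 / p21) * ((1/2 - ε) / (1/2 + ε))) :
    ∃ N : ℕ, ∀ n : ℕ, N ≤ n →
      μ {ω | 0 < 1 + ∑ i ∈ Finset.range (n - 1), Y i ω} ≥
        ENNReal.ofReal
          (1 - 2 * Real.exp (-2 * (phat22 * phat21 / (phat22 + phat21))^2 * Real.sqrt n)) :=
  surprise_two_candidates_P2_surprised_general μ ε hε hε' p22 p21 phat22 phat21 hp22 hp22' hp21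
    hp21' hphat22 hphat21 Y hmeas hindep hY1 hY2 hY0 hcond
end

section
/- In the two-candidate P_2-voter model, if p̂_{22}/p̂_{21} > (p_{22}/p_{21})·((1/2 − ε)/(1/2 + ε)), then there exists N such that for all n ≥ N, P(Z > 0) ≤ exp(−2·(p̂_{22}·p̂_{21}/(p̂_{22} + p̂_{21}))²·√n); i.e., a voter of class P_2 perceives a_2 as winner with probability tending to 0 as n → ∞, so she is not surprised with high probability. -/
/-!
Each `Y i` takes values in `[-1/p̂₂₁, 1/p̂₂₂]`, an interval of length `1/κ` with
`κ = p̂₂₂ p̂₂₁ / (p̂₂₂ + p̂₂₁)`, and the ratio hypothesis says exactly that its mean `m` is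
negative. The event `Z > 0` asks the sum of `n - 1` such variables to exceed its mean by
`s = (n - 1)|m| - 1`, so Hoeffding's inequality bounds its probability by
`exp (-2 κ² s² / (n - 1))`. Since `s` grows linearly in `n`, `s² / (n - 1) ≥ √n` eventually.
-/

open MeasureTheory ProbabilityTheory Filter

lemma eventually_mul_sqrt_le_sq {d : ℝ} (hd : 0 < d) (c : ℝ) :
    ∀ᶠ n : ℕ in atTop,
      0 ≤ ((n : ℝ) - 1) * d + c ∧ ((n : ℝ) - 1) * √n ≤ (((n : ℝ) - 1) * d + c) ^ 2 := by
  have hcast := tendsto_natCast_atTop_atTop (R := ℝ)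
  filter_upwards [hcast.eventually_ge_atTop 2, hcast.eventually_ge_atTop (-2 * c / d + 1),
    hcast.eventually_ge_atTop ((8 / d ^ 2) ^ 2)] with n hn₂ hnd hnsq
  set x : ℝ := (n : ℝ)
  have hdrift : -2 * c ≤ (x - 1) * d := by
    rw [← div_le_iff₀ hd]; linarith
  have hsqrt : 8 / d ^ 2 ≤ √x := Real.le_sqrt_of_sq_le hnsq
  have hsqrt_le : √x ≤ (x - 1) * d ^ 2 / 4 := by
    have h8 : 1 ≤ √x * d ^ 2 / 8 := by
      rw [div_le_iff₀ (by positivity)] at hsqrt; linarith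
    calc √x ≤ √x * (√x * d ^ 2 / 8) := le_mul_of_one_le_right (Real.sqrt_nonneg x) h8
      _ = x * d ^ 2 / 8 := by
        linear_combination d ^ 2 / 8 * Real.mul_self_sqrt (by linarith : 0 ≤ x)
      _ ≤ (x - 1) * d ^ 2 / 4 := by nlinarith [sq_nonneg d]
  have hhalf : 0 ≤ (x - 1) * d / 2 := by
    have := mul_nonneg (sub_nonneg.2 (by linarith : 1 ≤ x)) hd.le
    linarith
  refine ⟨by linarith, ?_⟩
  calc (x - 1) * √x ≤ (x - 1) * ((x - 1) * d ^ 2 / 4) :=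
        mul_le_mul_of_nonneg_left hsqrt_le (by linarith)
    _ = ((x - 1) * d / 2) ^ 2 := by ring
    _ ≤ ((x - 1) * d + c) ^ 2 := by gcongr; linarith

lemma drift_neg_of_ratio_gt {ε p22 p21 q22 q21 : ℝ} (hε : 0 < ε) (hp21 : 0 < p21)
    (hq22 : 0 < q22) (hq21 : 0 < q21) (h : q22 / q21 > (p22 / p21) * ((1/2 - ε) / (1/2 + ε))) :
    (1/2 - ε) * p22 * (1 / q22) + (1/2 + ε) * p21 * (-1 / q21) < 0 := by
  have hb : 0 < (1/2 + ε) * p21 := mul_pos (by linarith) hp21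
  have h' : (1/2 - ε) * p22 / ((1/2 + ε) * p21) < q22 / q21 := by
    convert h using 1; field_simp
  rw [div_lt_div_iff₀ hb hq21] at h'
  have : (1/2 - ε) * p22 / q22 < (1/2 + ε) * p21 / q21 := by
    rw [div_lt_div_iff₀ hq22 hq21]; linarith
  field_simp
  linarith

section

variable {Ω : Type*} [MeasurableSpace Ω] {μ : Measure Ω}

lemma ae_mem_of_sum_measure_eq_one [IsProbabilityMeasure μ] {β : Type*} [MeasurableSpace β]
    [MeasurableSingletonClass β] {X : Ω → β} (hX : Measurable X) (s : Finset β)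
    (h : ∑ x ∈ s, μ {ω | X ω = x} = 1) :
    ∀ᵐ ω ∂μ, X ω ∈ s := by
  have hs : μ (X ⁻¹' s) = 1 :=
    (sum_measure_preimage_singleton s fun y _ ↦ hX (measurableSet_singleton y)).symm.trans h
  exact (prob_compl_eq_zero_iff (hX s.finite_toSet.measurableSet)).2 hs

lemma integral_eq_sum_of_ae_mem_finset [IsFiniteMeasure μ] {X : Ω → ℝ} (hX : Measurable X)
    {s : Finset ℝ} (h : ∀ᵐ ω ∂μ, X ω ∈ s) : μ[X] = ∑ x ∈ s, μ.real {ω | X ω = x} * x := by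
  have hmap : (μ.map X).restrict s = μ.map X :=
    Measure.restrict_eq_self_of_ae_mem ((ae_map_iff hX.aemeasurable
      s.finite_toSet.measurableSet).2 h)
  have hint : IntegrableOn (fun y ↦ y) s (μ.map X) :=
    continuous_id.continuousOn.integrableOn_compact s.finite_toSet.isCompact
  calc μ[X] = ∫ y in s, y ∂(μ.map X) := by
        rw [hmap, integral_map hX.aemeasurable aestronglyMeasurable_id (f := fun y ↦ y)]
    _ = ∑ x ∈ s, μ.real {ω | X ω = x} * x := by
        rw [setIntegral_finset s hint]
        refine Finset.sum_congr rfl fun x _ ↦ ?_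
        rw [map_measureReal_apply hX (measurableSet_singleton x), smul_eq_mul]
        rfl

lemma ae_mem_Icc_and_integral_eq_of_three_point [IsProbabilityMeasure μ] {X : Ω → ℝ}
    (hX : Measurable X) {x₁ x₂ a b : ℝ} (hx₁ : 0 < x₁) (hx₂ : x₂ < 0) (ha : 0 ≤ a) (hb : 0 ≤ b)
    (hab : a + b ≤ 1)
    (hX₁ : μ {ω | X ω = x₁} = ENNReal.ofReal a) (hX₂ : μ {ω | X ω = x₂} = ENNReal.ofReal b)
    (hX₀ : μ {ω | X ω = 0} = ENNReal.ofReal (1 - a - b)) :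
    (∀ᵐ ω ∂μ, X ω ∈ Set.Icc x₂ x₁) ∧ μ[X] = a * x₁ + b * x₂ := by
  have hx₁₂ : x₁ ∉ ({x₂, 0} : Finset ℝ) := by simp [hx₁.ne', (hx₂.trans hx₁).ne']
  have hx₂₀ : x₂ ∉ ({0} : Finset ℝ) := by simp [hx₂.ne]
  have hsum : ∑ x ∈ {x₁, x₂, 0}, μ {ω | X ω = x} = 1 := by
    rw [Finset.sum_insert hx₁₂, Finset.sum_pair hx₂.ne, hX₁, hX₂, hX₀, ← add_assoc,
      ← ENNReal.ofReal_add ha hb, ← ENNReal.ofReal_add (by positivity) (by linarith)]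
    norm_num
  have hmem := ae_mem_of_sum_measure_eq_one hX _ hsum
  refine ⟨?_, ?_⟩
  · filter_upwards [hmem] with ω hω
    simp only [Finset.mem_insert, Finset.mem_singleton] at hω
    rcases hω with h | h | h <;> rw [h] <;> constructor <;> linarith
  · rw [integral_eq_sum_of_ae_mem_finset hX hmem, Finset.sum_insert hx₁₂,
      Finset.sum_pair hx₂.ne]
    simp only [measureReal_def, hX₁, hX₂, ENNReal.toReal_ofReal ha, ENNReal.toReal_ofReal hb]
    ring

lemma measureReal_sum_range_ge_le_of_mem_Icc [IsProbabilityMeasure μ] {Y : ℕ → Ω → ℝ}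
    (hY : ∀ i, Measurable (Y i)) (hindep : iIndepFun Y μ) {lo hi m : ℝ}
    (hbound : ∀ i, ∀ᵐ ω ∂μ, Y i ω ∈ Set.Icc lo hi)
    (hmean : ∀ i, μ[Y i] = m) (k : ℕ) {s : ℝ} (hs : 0 ≤ s) :
    μ.real {ω | k * m + s ≤ ∑ i ∈ Finset.range k, Y i ω} ≤
      Real.exp (-2 * s ^ 2 / (k * (hi - lo) ^ 2)) := by
  have hcentered : iIndepFun (fun i ω ↦ Y i ω - m) μ :=
    hindep.comp (fun _ y ↦ y - m) fun _ ↦ measurable_id.sub_const m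
  have hsubG : ∀ i < k, HasSubgaussianMGF (fun ω ↦ Y i ω - m) ((‖hi - lo‖₊ / 2) ^ 2) μ :=
    fun i _ ↦ hmean i ▸ hasSubgaussianMGF_of_mem_Icc (hY i).aemeasurable (hbound i)
  have hsum ω : ∑ i ∈ Finset.range k, (Y i ω - m) = ∑ i ∈ Finset.range k, Y i ω - k * m := by
    simp [Finset.sum_sub_distrib]
  calc μ.real {ω | k * m + s ≤ ∑ i ∈ Finset.range k, Y i ω}
      = μ.real {ω | s ≤ ∑ i ∈ Finset.range k, (Y i ω - m)} := by
        congr 1; ext ω; simp only [Set.mem_ofPred_eq, hsum]; constructor <;> intro h <;> linarith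
    _ ≤ Real.exp (-s ^ 2 / (2 * k * ((‖hi - lo‖₊ / 2) ^ 2 : NNReal))) :=
        HasSubgaussianMGF.measure_sum_range_ge_le_of_iIndepFun hcentered hsubG hs
    _ = Real.exp (-2 * s ^ 2 / (k * (hi - lo) ^ 2)) := by
        congr 1
        push_cast
        rw [Real.norm_eq_abs, div_pow, sq_abs,
          show 2 * (k : ℝ) * ((hi - lo) ^ 2 / 2 ^ 2) = k * (hi - lo) ^ 2 / 2 by ring,
          div_div_eq_mul_div]
        ring

lemma eventually_measure_sum_range_gt_le [IsProbabilityMeasure μ] {Y : ℕ → Ω → ℝ}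
    (hY : ∀ i, Measurable (Y i)) (hindep : iIndepFun Y μ) {lo hi m : ℝ}
    (hbound : ∀ i, ∀ᵐ ω ∂μ, Y i ω ∈ Set.Icc lo hi)
    (hmean : ∀ i, μ[Y i] = m) (hm : m < 0) (c : ℝ) :
    ∀ᶠ n : ℕ in atTop, μ {ω | c < ∑ i ∈ Finset.range (n - 1), Y i ω} ≤
      ENNReal.ofReal (Real.exp (-2 * (hi - lo)⁻¹ ^ 2 * √n)) := by
  filter_upwards [eventually_mul_sqrt_le_sq (neg_pos.2 hm) c, eventually_ge_atTop 2]
    with n ⟨hs, hsq⟩ hn₂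
  have hn₁ : (0 : ℝ) < n - 1 := by
    have : (2 : ℝ) ≤ n := by exact_mod_cast hn₂
    linarith
  set s := ((n : ℝ) - 1) * -m + c
  have hhoeff := measureReal_sum_range_ge_le_of_mem_Icc hY hindep hbound hmean (n - 1) hs
  rw [Nat.cast_sub (by omega), Nat.cast_one] at hhoeff
  have hexponent : -2 * s ^ 2 / ((n - 1) * (hi - lo) ^ 2) ≤ -2 * (hi - lo)⁻¹ ^ 2 * √n :=
    calc -2 * s ^ 2 / ((n - 1) * (hi - lo) ^ 2) = -2 * (hi - lo)⁻¹ ^ 2 * (s ^ 2 / (n - 1)) := by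
          rw [div_eq_mul_inv, mul_inv, inv_pow]; ring
      _ ≤ -2 * (hi - lo)⁻¹ ^ 2 * √n :=
          mul_le_mul_of_nonpos_left ((le_div_iff₀ hn₁).2 (by linarith))
            (by have := sq_nonneg (hi - lo)⁻¹; linarith)
  calc μ {ω | c < ∑ i ∈ Finset.range (n - 1), Y i ω}
      ≤ μ {ω | ((n : ℝ) - 1) * m + s ≤ ∑ i ∈ Finset.range (n - 1), Y i ω} :=
        measure_mono fun ω hω ↦ by
          simp only [s, Set.mem_ofPred_eq] at hω ⊢
          linarith
    _ = ENNReal.ofReal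
          (μ.real {ω | ((n : ℝ) - 1) * m + s ≤ ∑ i ∈ Finset.range (n - 1), Y i ω}) := by
        rw [ofReal_measureReal]
    _ ≤ _ := ENNReal.ofReal_le_ofReal (hhoeff.trans (Real.exp_le_exp.2 hexponent))

end

theorem surprise_two_candidates_P2_not_surprised_general
    {Ω : Type*} [MeasurableSpace Ω] (μ : Measure Ω) [IsProbabilityMeasure μ]
    (ε : ℝ) (hε : 0 < ε) (hε' : ε < 1/2)
    (p22 p21 phat22 phat21 : ℝ)
    (hp22 : 0 < p22) (hp22' : p22 ≤ 1) (hp21 : 0 < p21) (hp21' : p21 ≤ 1)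
    (hphat22 : 0 < phat22)
    (hphat21 : 0 < phat21)
    (Y : ℕ → Ω → ℝ) (hmeas : ∀ i, Measurable (Y i))
    (hindep : iIndepFun Y μ)
    (hY1 : ∀ i, μ {ω | Y i ω = 1/phat22} = ENNReal.ofReal ((1/2 - ε) * p22))
    (hY2 : ∀ i, μ {ω | Y i ω = -1/phat21} = ENNReal.ofReal ((1/2 + ε) * p21))
    (hY0 : ∀ i, μ {ω | Y i ω = 0} =
      ENNReal.ofReal (1 - (1/2 - ε) * p22 - (1/2 + ε) * p21))
    (hcond : phat22 / phat21 > (p22 / p21) * ((1/2 - ε) / (1/2 + ε))) :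
    ∃ N : ℕ, ∀ n : ℕ, N ≤ n →
      μ {ω | 0 < 1 + ∑ i ∈ Finset.range (n - 1), Y i ω} ≤
        ENNReal.ofReal
          (Real.exp (-2 * (phat22 * phat21 / (phat22 + phat21))^2 * Real.sqrt n)) := by
  have ha : 0 ≤ (1/2 - ε) * p22 := mul_nonneg (by linarith) hp22.le
  have hb : 0 ≤ (1/2 + ε) * p21 := mul_nonneg (by linarith) hp21.le
  have hab : (1/2 - ε) * p22 + (1/2 + ε) * p21 ≤ 1 := by
    linarith [mul_le_mul_of_nonneg_left hp22' (by linarith : (0 : ℝ) ≤ 1/2 - ε),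
      mul_le_mul_of_nonneg_left hp21' (by linarith : (0 : ℝ) ≤ 1/2 + ε)]
  have hlaw i := ae_mem_Icc_and_integral_eq_of_three_point (hmeas i) (by positivity)
    (by rw [neg_div, neg_neg_iff_pos]; positivity) ha hb hab (hY1 i) (hY2 i) (hY0 i)
  have hrange : (1 / phat22 - -1 / phat21)⁻¹ = phat22 * phat21 / (phat22 + phat21) := by
    rw [div_sub_div _ _ hphat22.ne' hphat21.ne', inv_div]
    ring
  obtain ⟨N, hN⟩ := eventually_atTop.1 <| eventually_measure_sum_range_gt_le hmeas hindep
    (fun i ↦ (hlaw i).1) (fun i ↦ (hlaw i).2)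
    (drift_neg_of_ratio_gt hε hp21 hphat22 hphat21 hcond) (-1)
  refine ⟨N, fun n hn ↦ (measure_mono fun ω hω ↦ ?_).trans (hrange ▸ hN n hn)⟩
  simp only [Set.mem_ofPred_eq] at hω ⊢
  linarith

/-- Two-candidate model, voter `v ∈ P₂`.  If
`p̂₂₂/p̂₂₁ > (p₂₂/p₂₁)·((1/2-ε)/(1/2+ε))` then there is `N` such that for all
`n ≥ N`, `P(Z > 0) ≤ exp(-2 (p̂₂₂ p̂₂₁/(p̂₂₂+p̂₂₁))² √n)`, i.e. the voter is not
surprised with high probability. -/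
theorem surprise_two_candidates_P2_not_surprised
    {Ω : Type*} [MeasurableSpace Ω] (μ : Measure Ω) [IsProbabilityMeasure μ]
    (ε : ℝ) (hε : 0 < ε) (hε' : ε < 1/2)
    (p22 p21 phat22 phat21 : ℝ)
    (hp22 : 0 < p22) (hp22' : p22 ≤ 1) (hp21 : 0 < p21) (hp21' : p21 ≤ 1)
    (hphat22 : 0 < phat22) (hphat22' : phat22 ≤ 1)
    (hphat21 : 0 < phat21) (hphat21' : phat21 ≤ 1)
    (Y : ℕ → Ω → ℝ) (hmeas : ∀ i, Measurable (Y i))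
    (hindep : iIndepFun Y μ)
    (hY1 : ∀ i, μ {ω | Y i ω = 1/phat22} = ENNReal.ofReal ((1/2 - ε) * p22))
    (hY2 : ∀ i, μ {ω | Y i ω = -1/phat21} = ENNReal.ofReal ((1/2 + ε) * p21))
    (hY0 : ∀ i, μ {ω | Y i ω = 0} =
      ENNReal.ofReal (1 - (1/2 - ε) * p22 - (1/2 + ε) * p21))
    (hcond : phat22 / phat21 > (p22 / p21) * ((1/2 - ε) / (1/2 + ε))) :
    ∃ N : ℕ, ∀ n : ℕ, N ≤ n →
      μ {ω | 0 < 1 + ∑ i ∈ Finset.range (n - 1), Y i ω} ≤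
        ENNReal.ofReal
          (Real.exp (-2 * (phat22 * phat21 / (phat22 + phat21))^2 * Real.sqrt n)) :=
  surprise_two_candidates_P2_not_surprised_general μ ε hε hε' p22 p21 phat22 phat21 hp22 hp22' hp21
    hp21' hphat22 hphat21 Y hmeas hindep hY1 hY2 hY0 hcond
end

section
/- (Perfect estimates imply no surprise.) In the two-candidate P_2-voter model, if the voter's estimates are exact, i.e., p̂_{22} = p_{22} and p̂_{21} = p_{21}, then there exists N such that for all n ≥ N, P(Z > 0) ≤ exp(−2·(p_{22}·p_{21}/(p_{22} + p_{21}))²·√n); hence a P_2 voter with perfect connection-probability estimates is not surprised with high probability. -/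
/-!
With exact estimates each `Y i` has mean `(1/2 - ε) - (1/2 + ε) = -2ε` and takes values in
`[-1/p₂₁, 1/p₂₂]`, an interval of length `1/c` with `c = p₂₂ p₂₁ / (p₂₂ + p₂₁)`. Hoeffding's
inequality bounds `P(∑_{i<m} Y i ≥ -1)` by `exp (-2 c² (2εm - 1)² / m)`, and `(2εm - 1)² / m`
grows linearly in `m`, so it eventually exceeds `√(m + 1)`.
-/

open MeasureTheory ProbabilityTheory Real

section FiniteRange

variable {Ω E : Type*} [MeasurableSpace Ω] {μ : Measure Ω} [MeasurableSpace E]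
  [MeasurableSingletonClass E] {W : Ω → E} {s : Finset E}

lemma ae_mem_of_sum_measure_eq_one_s5 [IsProbabilityMeasure μ] (hW : Measurable W)
    (hs : ∑ v ∈ s, μ {ω | W ω = v} = 1) : ∀ᵐ ω ∂μ, W ω ∈ s := by
  have hpreimage := sum_measure_preimage_singleton (μ := μ) s fun v _ =>
    hW (measurableSet_singleton v)
  exact (mem_ae_iff_prob_eq_one (hW s.measurableSet)).2 (hpreimage.symm.trans hs)

lemma integral_eq_sum_of_ae_mem [NormedAddCommGroup E] [NormedSpace ℝ E] [CompleteSpace E]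
    [IsFiniteMeasure μ] (hW : Measurable W) (hs : ∀ᵐ ω ∂μ, W ω ∈ s) :
    ∫ ω, W ω ∂μ = ∑ v ∈ s, μ.real {ω | W ω = v} • v := by
  have hfiber (v : E) : MeasurableSet (W ⁻¹' {v}) := hW (measurableSet_singleton v)
  have hW_eq : W =ᵐ[μ] fun ω => ∑ v ∈ s, (W ⁻¹' {v}).indicator (fun _ => v) ω := by
    filter_upwards [hs] with ω hω
    classical
    simp only [Set.indicator_apply, Set.mem_preimage, Set.mem_singleton_iff]
    rw [Finset.sum_ite_eq, if_pos hω]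
  rw [integral_congr_ae hW_eq,
    integral_finsetSum _ fun v _ => (integrable_const v).indicator (hfiber v)]
  exact Finset.sum_congr rfl fun v _ => integral_indicator_const v (hfiber v)

end FiniteRange

section ThreePoint

variable {Ω : Type*} [MeasurableSpace Ω] {μ : Measure Ω} [IsProbabilityMeasure μ] {W : Ω → ℝ}
  {x y qx qy : ℝ}

lemma ae_mem_of_three_point (hW : Measurable W) (hy : y < 0) (hx : 0 < x) (hqx : 0 ≤ qx)
    (hqy : 0 ≤ qy) (hq : qx + qy ≤ 1) (hWx : μ {ω | W ω = x} = ENNReal.ofReal qx)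
    (hWy : μ {ω | W ω = y} = ENNReal.ofReal qy)
    (hW0 : μ {ω | W ω = 0} = ENNReal.ofReal (1 - qx - qy)) :
    ∀ᵐ ω ∂μ, W ω ∈ ({x, y, 0} : Finset ℝ) := by
  refine ae_mem_of_sum_measure_eq_one_s5 hW ?_
  rw [Finset.sum_insert (by simp [hx.ne', (hy.trans hx).ne']), Finset.sum_pair hy.ne, hWx, hWy,
    hW0, ← add_assoc, ← ENNReal.ofReal_add hqx hqy,
    ← ENNReal.ofReal_add (by positivity) (by linarith)]
  ring_nf
  exact ENNReal.ofReal_one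

lemma ae_mem_Icc_of_three_point (hW : Measurable W) (hy : y < 0) (hx : 0 < x) (hqx : 0 ≤ qx)
    (hqy : 0 ≤ qy) (hq : qx + qy ≤ 1) (hWx : μ {ω | W ω = x} = ENNReal.ofReal qx)
    (hWy : μ {ω | W ω = y} = ENNReal.ofReal qy)
    (hW0 : μ {ω | W ω = 0} = ENNReal.ofReal (1 - qx - qy)) :
    ∀ᵐ ω ∂μ, W ω ∈ Set.Icc y x := by
  filter_upwards [ae_mem_of_three_point hW hy hx hqx hqy hq hWx hWy hW0] with ω hω
  simp only [Finset.mem_insert, Finset.mem_singleton] at hω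
  rcases hω with h | h | h <;> rw [h] <;> constructor <;> linarith

lemma integral_eq_of_three_point (hW : Measurable W) (hy : y < 0) (hx : 0 < x) (hqx : 0 ≤ qx)
    (hqy : 0 ≤ qy) (hq : qx + qy ≤ 1) (hWx : μ {ω | W ω = x} = ENNReal.ofReal qx)
    (hWy : μ {ω | W ω = y} = ENNReal.ofReal qy)
    (hW0 : μ {ω | W ω = 0} = ENNReal.ofReal (1 - qx - qy)) :
    μ[W] = qx * x + qy * y := by
  rw [integral_eq_sum_of_ae_mem hW (ae_mem_of_three_point hW hy hx hqx hqy hq hWx hWy hW0),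
    Finset.sum_insert (by simp [hx.ne', (hy.trans hx).ne']), Finset.sum_pair hy.ne,
    measureReal_def, measureReal_def, hWx, hWy, ENNReal.toReal_ofReal hqx,
    ENNReal.toReal_ofReal hqy]
  simp

end ThreePoint

lemma measureReal_le_sum_range_le_exp {Ω : Type*} [MeasurableSpace Ω] {μ : Measure Ω}
    [IsProbabilityMeasure μ] {Y : ℕ → Ω → ℝ} (hmeas : ∀ i, Measurable (Y i))
    (hindep : iIndepFun Y μ) {a b ν : ℝ} (hbd : ∀ i, ∀ᵐ ω ∂μ, Y i ω ∈ Set.Icc a b)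
    (hmean : ∀ i, μ[Y i] = ν) {m : ℕ} {t : ℝ} (ht : m * ν ≤ t) :
    μ.real {ω | t ≤ ∑ i ∈ Finset.range m, Y i ω} ≤
      exp (-2 * (t - m * ν) ^ 2 / (m * (b - a) ^ 2)) := by
  have hcentered : iIndepFun (fun i ω => Y i ω - ν) μ :=
    hindep.comp (fun _ x => x - ν) fun _ => measurable_sub_const ν
  have hsubG (i : ℕ) (_ : i < m) :
      HasSubgaussianMGF (fun ω => Y i ω - ν) ((‖b - a‖₊ / 2) ^ 2) μ :=
    hmean i ▸ hasSubgaussianMGF_of_mem_Icc (hmeas i).aemeasurable (hbd i)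
  have hoeffding := HasSubgaussianMGF.measure_sum_range_ge_le_of_iIndepFun hcentered hsubG
    (sub_nonneg.2 ht)
  convert hoeffding using 2
  · ext ω
    simp [Finset.sum_sub_distrib]
  · push_cast
    rw [Real.norm_eq_abs, div_pow, sq_abs,
      show 2 * (m : ℝ) * ((b - a) ^ 2 / 2 ^ 2) = m * (b - a) ^ 2 / 2 by ring, div_div_eq_mul_div]
    ring

lemma exists_sqrt_succ_le_sq_div {ε : ℝ} (hε : 0 < ε) :
    ∃ N : ℕ, ∀ m ≥ N, 1 ≤ 2 * ε * m ∧ √(m + 1) ≤ (2 * ε * m - 1) ^ 2 / m := by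
  refine ⟨⌈1 / ε + 2 / ε ^ 4⌉₊ + 1, fun m hm => ?_⟩
  have hm' : 1 / ε + 2 / ε ^ 4 + 1 ≤ m := by
    have hceil := Nat.le_ceil (1 / ε + 2 / ε ^ 4)
    have hm_cast : (⌈1 / ε + 2 / ε ^ 4⌉₊ + 1 : ℝ) ≤ m := by exact_mod_cast hm
    linarith
  have hm_one : (1 : ℝ) ≤ m := by linarith [show 0 ≤ 1 / ε + 2 / ε ^ 4 by positivity]
  have hm_pos : (0 : ℝ) < m := by linarith
  have hεm : 1 ≤ ε * m := by
    have : 1 / ε ≤ m := by linarith [show 0 ≤ 2 / ε ^ 4 by positivity]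
    rwa [div_le_iff₀ hε, mul_comm] at this
  have hε4m : 2 ≤ ε ^ 4 * m := by
    have : 2 / ε ^ 4 ≤ m := by linarith [show 0 ≤ 1 / ε by positivity]
    rwa [div_le_iff₀ (by positivity), mul_comm] at this
  refine ⟨by linarith, ?_⟩
  rw [le_div_iff₀ hm_pos]
  calc √(m + 1) * m ≤ ε ^ 2 * m * m := by
        gcongr
        rw [sqrt_le_left (by positivity)]
        have := mul_le_mul_of_nonneg_right hε4m hm_pos.le
        linarith [show (ε ^ 2 * m) ^ 2 = ε ^ 4 * m * m by ring]
    _ = (ε * m) ^ 2 := by ring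
    _ ≤ (2 * ε * m - 1) ^ 2 := by gcongr; linarith

lemma exists_forall_measure_neg_one_le_sum_range_le_exp {Ω : Type*} [MeasurableSpace Ω]
    {μ : Measure Ω} [IsProbabilityMeasure μ] {Y : ℕ → Ω → ℝ} (hmeas : ∀ i, Measurable (Y i))
    (hindep : iIndepFun Y μ) {a b ε : ℝ} (hε : 0 < ε)
    (hbd : ∀ i, ∀ᵐ ω ∂μ, Y i ω ∈ Set.Icc a b) (hmean : ∀ i, μ[Y i] = -2 * ε) :
    ∃ N : ℕ, ∀ m ≥ N, μ {ω | -1 ≤ ∑ i ∈ Finset.range m, Y i ω} ≤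
      ENNReal.ofReal (exp (-2 / (b - a) ^ 2 * √(m + 1))) := by
  obtain ⟨N, hN⟩ := exists_sqrt_succ_le_sq_div hε
  refine ⟨N, fun m hm => ?_⟩
  obtain ⟨hdrift, hsqrt⟩ := hN m hm
  rw [← ofReal_measureReal]
  refine ENNReal.ofReal_le_ofReal <| (measureReal_le_sum_range_le_exp hmeas hindep hbd hmean
    (by linarith)).trans (exp_le_exp.2 ?_)
  calc -2 * (-1 - m * (-2 * ε)) ^ 2 / (m * (b - a) ^ 2)
      = -2 / (b - a) ^ 2 * ((2 * ε * m - 1) ^ 2 / m) := by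
        rw [div_mul_div_comm, mul_comm ((b - a) ^ 2)]
        congr 1
        ring
    _ ≤ -2 / (b - a) ^ 2 * √(m + 1) :=
        mul_le_mul_of_nonpos_left hsqrt
          (div_nonpos_of_nonpos_of_nonneg (by norm_num) (sq_nonneg _))

theorem surprise_two_candidates_perfect_estimates_general
    {Ω : Type*} [MeasurableSpace Ω] (μ : Measure Ω) [IsProbabilityMeasure μ]
    (ε : ℝ) (hε : 0 < ε) (hε' : ε < 1/2)
    (p22 p21 phat22 phat21 : ℝ)
    (hp22 : 0 < p22) (hp22' : p22 ≤ 1) (hp21 : 0 < p21) (hp21' : p21 ≤ 1)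
    (Y : ℕ → Ω → ℝ) (hmeas : ∀ i, Measurable (Y i))
    (hindep : iIndepFun Y μ)
    (hY1 : ∀ i, μ {ω | Y i ω = 1/phat22} = ENNReal.ofReal ((1/2 - ε) * p22))
    (hY2 : ∀ i, μ {ω | Y i ω = -1/phat21} = ENNReal.ofReal ((1/2 + ε) * p21))
    (hY0 : ∀ i, μ {ω | Y i ω = 0} =
      ENNReal.ofReal (1 - (1/2 - ε) * p22 - (1/2 + ε) * p21))
    (hexact22 : phat22 = p22) (hexact21 : phat21 = p21) :
    ∃ N : ℕ, ∀ n : ℕ, N ≤ n →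
      μ {ω | 0 < 1 + ∑ i ∈ Finset.range (n - 1), Y i ω} ≤
        ENNReal.ofReal
          (Real.exp (-2 * (p22 * p21 / (p22 + p21))^2 * Real.sqrt n)) := by
  subst phat22 phat21
  have hneg : -1 / p21 < 0 := by rw [neg_div]; exact neg_neg_of_pos (by positivity)
  have hpos : 0 < 1 / p22 := by positivity
  have hq22 : 0 ≤ (1/2 - ε) * p22 := mul_nonneg (by linarith) hp22.le
  have hq21 : 0 ≤ (1/2 + ε) * p21 := mul_nonneg (by linarith) hp21.le
  have hq : (1/2 - ε) * p22 + (1/2 + ε) * p21 ≤ 1 := by nlinarith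
  have hbd (i : ℕ) :=
    ae_mem_Icc_of_three_point (hmeas i) hneg hpos hq22 hq21 hq (hY1 i) (hY2 i) (hY0 i)
  have hmean (i : ℕ) : μ[Y i] = -2 * ε := by
    rw [integral_eq_of_three_point (hmeas i) hneg hpos hq22 hq21 hq (hY1 i) (hY2 i) (hY0 i)]
    field_simp
    ring
  obtain ⟨N, hN⟩ := exists_forall_measure_neg_one_le_sum_range_le_exp hmeas hindep hε hbd hmean
  refine ⟨N + 1, fun n hn => ?_⟩
  obtain ⟨m, rfl⟩ : ∃ m, n = m + 1 := ⟨n - 1, by omega⟩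
  have hwidth : 1 / p22 - -1 / p21 = (p22 * p21 / (p22 + p21))⁻¹ := by
    field_simp
    ring
  calc μ {ω | 0 < 1 + ∑ i ∈ Finset.range (m + 1 - 1), Y i ω}
      ≤ μ {ω | -1 ≤ ∑ i ∈ Finset.range m, Y i ω} := by
        refine measure_mono fun ω hω => ?_
        simp only [Nat.add_sub_cancel, Set.mem_ofPred_eq] at hω ⊢
        linarith
    _ ≤ _ := hN m (by omega)
    _ = _ := by rw [hwidth, inv_pow, div_inv_eq_mul, Nat.cast_succ]

/-- (Perfect estimates imply no surprise.)  Two-candidate model,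
voter `v ∈ P₂`, with exact estimates `p̂₂₂ = p₂₂`, `p̂₂₁ = p₂₁`.  Then there is `N`
such that for all `n ≥ N`, `P(Z > 0) ≤ exp(-2 (p₂₂ p₂₁/(p₂₂+p₂₁))² √n)`. -/
theorem surprise_two_candidates_perfect_estimates
    {Ω : Type*} [MeasurableSpace Ω] (μ : Measure Ω) [IsProbabilityMeasure μ]
    (ε : ℝ) (hε : 0 < ε) (hε' : ε < 1/2)
    (p22 p21 phat22 phat21 : ℝ)
    (hp22 : 0 < p22) (hp22' : p22 ≤ 1) (hp21 : 0 < p21) (hp21' : p21 ≤ 1)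
    (hphat22 : 0 < phat22) (hphat22' : phat22 ≤ 1)
    (hphat21 : 0 < phat21) (hphat21' : phat21 ≤ 1)
    (Y : ℕ → Ω → ℝ) (hmeas : ∀ i, Measurable (Y i))
    (hindep : iIndepFun Y μ)
    (hY1 : ∀ i, μ {ω | Y i ω = 1/phat22} = ENNReal.ofReal ((1/2 - ε) * p22))
    (hY2 : ∀ i, μ {ω | Y i ω = -1/phat21} = ENNReal.ofReal ((1/2 + ε) * p21))
    (hY0 : ∀ i, μ {ω | Y i ω = 0} =
      ENNReal.ofReal (1 - (1/2 - ε) * p22 - (1/2 + ε) * p21))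
    (hexact22 : phat22 = p22) (hexact21 : phat21 = p21) :
    ∃ N : ℕ, ∀ n : ℕ, N ≤ n →
      μ {ω | 0 < 1 + ∑ i ∈ Finset.range (n - 1), Y i ω} ≤
        ENNReal.ofReal
          (Real.exp (-2 * (p22 * p21 / (p22 + p21))^2 * Real.sqrt n)) :=
  surprise_two_candidates_perfect_estimates_general μ ε hε hε' p22 p21 phat22 phat21 hp22 hp22' hp21
    hp21' Y hmeas hindep hY1 hY2 hY0 hexact22 hexact21
end

section
/- In the three-candidate model, for a voter v ∈ P_1 and any normalized scoring rule (s_1, s_2, 0), the per-neighbor score-difference variable X (contribution to ŝ_v(a_1) − ŝ_v(a_2)) satisfies E[X] = (s_1 − s_2)·(p/(6p̂) − q/(6q̂)); in particular, under the monotone estimation error assumption p/p̂ ≥ q/q̂ and s_1 ≥ s_2, we have E[X] ≥ 0. -/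
open MeasureTheory

/-
The class `K` of the random other voter takes finitely many values, so `E[X]` is the finite sum
of the seven values weighted by their probabilities. The four inter-class values `±s₁/q̂, ±s₂/q̂`
are equally likely and cancel in pairs, leaving `(p/6)(s₁ - s₂)/p̂ - (q/6)(s₁ - s₂)/q̂`, which
has the sign of `s₁ - s₂` as soon as `p/p̂ ≥ q/q̂`.
-/

theorem integral_comp_of_fintype {Ω ι E : Type*} [MeasurableSpace Ω] {μ : Measure Ω}
    [IsFiniteMeasure μ] [Fintype ι] [MeasurableSpace ι] [MeasurableSingletonClass ι]
    [NormedAddCommGroup E] [NormedSpace ℝ E] [CompleteSpace E] {K : Ω → ι} (hK : Measurable K)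
    (f : ι → E) :
    ∫ ω, f (K ω) ∂μ = ∑ i, μ.real (K ⁻¹' {i}) • f i := by
  rw [← integral_map hK.aemeasurable StronglyMeasurable.of_discrete.aestronglyMeasurable,
    integral_fintype .of_finite]
  simp only [map_measureReal_apply hK (measurableSet_singleton _)]

theorem measureReal_eq_of_eq_ofReal {Ω : Type*} [MeasurableSpace Ω] {μ : Measure Ω}
    {s : Set Ω} {a : ℝ} (ha : 0 ≤ a) (h : μ s = ENNReal.ofReal a) : μ.real s = a := by
  rw [measureReal_def, h, ENNReal.toReal_ofReal ha]

/-- Outcome `0` is a neighbour from `P₁`, outcomes `1`–`5` a neighbour from one of the other five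
classes, and `6` no neighbour. -/
noncomputable def p1ScoreDiff (phat qhat s1 s2 : ℝ) : Fin 7 → ℝ :=
  ![(s1 - s2) / phat, -(s1 - s2) / qhat, s1 / qhat, -s1 / qhat, s2 / qhat, -s2 / qhat, 0]

theorem sum_mul_p1ScoreDiff (p phat q qhat s1 s2 : ℝ) (w : Fin 7 → ℝ) (hw0 : w 0 = p / 6)
    (hw1 : w 1 = q / 6) (hw2 : w 2 = q / 6) (hw3 : w 3 = q / 6) (hw4 : w 4 = q / 6)
    (hw5 : w 5 = q / 6) :
    ∑ i, w i • p1ScoreDiff phat qhat s1 s2 i = (s1 - s2) * (p / (6 * phat) - q / (6 * qhat)) := by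
  simp only [Fin.sum_univ_seven, p1ScoreDiff, smul_eq_mul, hw0, hw1, hw2, hw3, hw4, hw5,
    Matrix.cons_val_zero, Matrix.cons_val_one, Matrix.cons_val]
  ring

theorem mul_sub_div_nonneg_of_div_le {p phat q qhat s1 s2 : ℝ} (hs : s2 ≤ s1)
    (hmee : q / qhat ≤ p / phat) : 0 ≤ (s1 - s2) * (p / (6 * phat) - q / (6 * qhat)) := by
  have hdiff : q / (6 * qhat) ≤ p / (6 * phat) := by
    rw [mul_comm 6 qhat, mul_comm 6 phat, ← div_div, ← div_div]
    gcongr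
  exact mul_nonneg (sub_nonneg.2 hs) (sub_nonneg.2 hdiff)

theorem three_candidates_P1_mean_general
    {Ω : Type*} [MeasurableSpace Ω] (μ : Measure Ω) [IsProbabilityMeasure μ]
    (p phat q qhat s1 s2 : ℝ)
    (hp : 0 < p) (hq : 0 < q)
    (hs1 : s2 ≤ s1)
    (K : Ω → Fin 7) (hK : Measurable K)
    (h0 : μ (K ⁻¹' {0}) = ENNReal.ofReal (p/6))
    (h1 : μ (K ⁻¹' {1}) = ENNReal.ofReal (q/6))
    (h2 : μ (K ⁻¹' {2}) = ENNReal.ofReal (q/6))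
    (h3 : μ (K ⁻¹' {3}) = ENNReal.ofReal (q/6))
    (h4 : μ (K ⁻¹' {4}) = ENNReal.ofReal (q/6))
    (h5 : μ (K ⁻¹' {5}) = ENNReal.ofReal (q/6))
    (X : Ω → ℝ)
    (hX : X = fun ω =>
      if K ω = 0 then (s1 - s2)/phat
      else if K ω = 1 then -(s1 - s2)/qhat
      else if K ω = 2 then s1/qhat
      else if K ω = 3 then -s1/qhat
      else if K ω = 4 then s2/qhat
      else if K ω = 5 then -s2/qhat
      else 0) :
    (∫ ω, X ω ∂μ = (s1 - s2) * (p/(6*phat) - q/(6*qhat))) ∧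
    (p/phat ≥ q/qhat → 0 ≤ ∫ ω, X ω ∂μ) := by
  have hXK : X = fun ω => p1ScoreDiff phat qhat s1 s2 (K ω) := by
    subst hX
    funext ω
    generalize K ω = i
    fin_cases i <;> rfl
  have hp6 : 0 ≤ p / 6 := by positivity
  have hq6 : 0 ≤ q / 6 := by positivity
  have hmean : ∫ ω, X ω ∂μ = (s1 - s2) * (p/(6*phat) - q/(6*qhat)) := by
    rw [hXK, integral_comp_of_fintype hK]
    exact sum_mul_p1ScoreDiff p phat q qhat s1 s2 _ (measureReal_eq_of_eq_ofReal hp6 h0)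
      (measureReal_eq_of_eq_ofReal hq6 h1) (measureReal_eq_of_eq_ofReal hq6 h2)
      (measureReal_eq_of_eq_ofReal hq6 h3) (measureReal_eq_of_eq_ofReal hq6 h4)
      (measureReal_eq_of_eq_ofReal hq6 h5)
  exact ⟨hmean, fun hmee => hmean ▸ mul_sub_div_nonneg_of_div_le hs1 hmee⟩

/-- Three-candidate model, voter `v ∈ P₁`, normalized scoring
rule `(s₁, s₂, 0)`.  The per-neighbor contribution `X` to the estimated score
difference `ŝ_v(a₁) - ŝ_v(a₂)` takes value `(s₁-s₂)/p̂` w.p. `p/6`; values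
`-(s₁-s₂)/q̂, s₁/q̂, -s₁/q̂, s₂/q̂, -s₂/q̂` each w.p. `q/6`; and `0` otherwise.
Then `E[X] = (s₁-s₂)(p/(6p̂) - q/(6q̂))`; under MEE `p/p̂ ≥ q/q̂`, `E[X] ≥ 0`. -/
theorem three_candidates_P1_mean
    {Ω : Type*} [MeasurableSpace Ω] (μ : Measure Ω) [IsProbabilityMeasure μ]
    (p phat q qhat s1 s2 : ℝ)
    (hp : 0 < p) (hp' : p ≤ 1) (hq : 0 < q) (hq' : q ≤ 1)
    (hphat : 0 < phat) (hphat' : phat ≤ 1) (hqhat : 0 < qhat) (hqhat' : qhat ≤ 1)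
    (hs1 : s2 ≤ s1) (hs2 : 0 ≤ s2) (hsum : s1 + s2 = 1)
    (K : Ω → Fin 7) (hK : Measurable K)
    (h0 : μ (K ⁻¹' {0}) = ENNReal.ofReal (p/6))
    (h1 : μ (K ⁻¹' {1}) = ENNReal.ofReal (q/6))
    (h2 : μ (K ⁻¹' {2}) = ENNReal.ofReal (q/6))
    (h3 : μ (K ⁻¹' {3}) = ENNReal.ofReal (q/6))
    (h4 : μ (K ⁻¹' {4}) = ENNReal.ofReal (q/6))
    (h5 : μ (K ⁻¹' {5}) = ENNReal.ofReal (q/6))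
    (X : Ω → ℝ)
    (hX : X = fun ω =>
      if K ω = 0 then (s1 - s2)/phat
      else if K ω = 1 then -(s1 - s2)/qhat
      else if K ω = 2 then s1/qhat
      else if K ω = 3 then -s1/qhat
      else if K ω = 4 then s2/qhat
      else if K ω = 5 then -s2/qhat
      else 0) :
    (∫ ω, X ω ∂μ = (s1 - s2) * (p/(6*phat) - q/(6*qhat))) ∧
    (p/phat ≥ q/qhat → 0 ≤ ∫ ω, X ω ∂μ) :=
  three_candidates_P1_mean_general μ p phat q qhat s1 s2 hp hq hs1 K hK h0 h1 h2 h3 h4 h5 X hX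
end

section
/- In the three-candidate model, for a voter v ∈ P_1 and any normalized scoring rule (s_1, s_2, 0), the per-neighbor score-difference variable X′ (contribution to ŝ_v(a_3) − ŝ_v(a_2)) satisfies E[X′] = s_2·(q/(6q̂) − p/(6p̂)); in particular, under the monotone estimation error assumption p/p̂ ≥ q/q̂ and s_1 ≥ s_2, we have E[X′] ≤ 0 ≤ E[X] = (s_1 − s_2)·(p/(6p̂) − q/(6q̂)), so the expected contribution toward a_1 beating a_2 dominates that toward a_3 beating a_2. -/
open MeasureTheory ProbabilityTheory

theorem integral_comp_eq_sum_measureReal_preimage {Ω ι E : Type*} [MeasurableSpace Ω]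
    [NormedAddCommGroup E] [NormedSpace ℝ E] [CompleteSpace E] [Fintype ι] [MeasurableSpace ι]
    [DiscreteMeasurableSpace ι] (μ : Measure Ω) [IsFiniteMeasure μ]
    {K : Ω → ι} (hK : Measurable K) (c : ι → E) :
    ∫ ω, c (K ω) ∂μ = ∑ i, μ.real (K ⁻¹' {i}) • c i := by
  rw [← integral_map hK.aemeasurable (.of_discrete), integral_fintype .of_finite]
  simp only [map_measureReal_apply hK (.of_discrete)]

theorem integral_ite_fin_seven {Ω : Type*} [MeasurableSpace Ω] (μ : Measure Ω)
    [IsFiniteMeasure μ] {K : Ω → Fin 7} (hK : Measurable K) {p q : ℝ} (hp : 0 ≤ p) (hq : 0 ≤ q)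
    (h0 : μ (K ⁻¹' {0}) = ENNReal.ofReal (p / 6))
    (h1 : μ (K ⁻¹' {1}) = ENNReal.ofReal (q / 6))
    (h2 : μ (K ⁻¹' {2}) = ENNReal.ofReal (q / 6))
    (h3 : μ (K ⁻¹' {3}) = ENNReal.ofReal (q / 6))
    (h4 : μ (K ⁻¹' {4}) = ENNReal.ofReal (q / 6))
    (h5 : μ (K ⁻¹' {5}) = ENNReal.ofReal (q / 6)) (a₀ a₁ a₂ a₃ a₄ a₅ : ℝ) :
    ∫ ω, (if K ω = 0 then a₀ else if K ω = 1 then a₁ else if K ω = 2 then a₂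
      else if K ω = 3 then a₃ else if K ω = 4 then a₄ else if K ω = 5 then a₅ else 0) ∂μ =
      p / 6 * a₀ + q / 6 * (a₁ + a₂ + a₃ + a₄ + a₅) := by
  have hcomp : ∀ ω, (if K ω = 0 then a₀ else if K ω = 1 then a₁ else if K ω = 2 then a₂
      else if K ω = 3 then a₃ else if K ω = 4 then a₄ else if K ω = 5 then a₅ else 0) =
      ![a₀, a₁, a₂, a₃, a₄, a₅, 0] (K ω) := fun ω => by
    generalize K ω = k
    fin_cases k <;> rfl
  have hp6 : (ENNReal.ofReal (p / 6)).toReal = p / 6 := ENNReal.toReal_ofReal (by positivity)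
  have hq6 : (ENNReal.ofReal (q / 6)).toReal = q / 6 := ENNReal.toReal_ofReal (by positivity)
  simp only [hcomp, integral_comp_eq_sum_measureReal_preimage μ hK, Fin.sum_univ_seven,
    measureReal_def, h0, h1, h2, h3, h4, h5, hp6, hq6, Matrix.cons_val_zero, Matrix.cons_val_one,
    Matrix.cons_val, smul_eq_mul, mul_zero, add_zero]
  ring

theorem three_candidates_P1_dominant_false_beating_general
    {Ω : Type*} [MeasurableSpace Ω] (μ : Measure Ω) [IsProbabilityMeasure μ]
    (p phat q qhat s1 s2 : ℝ)
    (hp : 0 < p) (hq : 0 < q)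
    (hs1 : s2 ≤ s1) (hs2 : 0 ≤ s2)
    (K : Ω → Fin 7) (hK : Measurable K)
    (h0 : μ (K ⁻¹' {0}) = ENNReal.ofReal (p/6))
    (h1 : μ (K ⁻¹' {1}) = ENNReal.ofReal (q/6))
    (h2 : μ (K ⁻¹' {2}) = ENNReal.ofReal (q/6))
    (h3 : μ (K ⁻¹' {3}) = ENNReal.ofReal (q/6))
    (h4 : μ (K ⁻¹' {4}) = ENNReal.ofReal (q/6))
    (h5 : μ (K ⁻¹' {5}) = ENNReal.ofReal (q/6))
    (X : Ω → ℝ)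
    (hX : X = fun ω =>
      if K ω = 0 then (s1 - s2)/phat
      else if K ω = 1 then -(s1 - s2)/qhat
      else if K ω = 2 then s1/qhat
      else if K ω = 3 then -s1/qhat
      else if K ω = 4 then s2/qhat
      else if K ω = 5 then -s2/qhat
      else 0)
    (K' : Ω → Fin 7) (hK' : Measurable K')
    (h0' : μ (K' ⁻¹' {0}) = ENNReal.ofReal (p/6))
    (h1' : μ (K' ⁻¹' {1}) = ENNReal.ofReal (q/6))
    (h2' : μ (K' ⁻¹' {2}) = ENNReal.ofReal (q/6))
    (h3' : μ (K' ⁻¹' {3}) = ENNReal.ofReal (q/6))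
    (h4' : μ (K' ⁻¹' {4}) = ENNReal.ofReal (q/6))
    (h5' : μ (K' ⁻¹' {5}) = ENNReal.ofReal (q/6))
    (X' : Ω → ℝ)
    (hX' : X' = fun ω =>
      if K' ω = 0 then -s2/phat
      else if K' ω = 1 then (s1 - s2)/qhat
      else if K' ω = 2 then -(s1 - s2)/qhat
      else if K' ω = 3 then s2/qhat
      else if K' ω = 4 then s1/qhat
      else if K' ω = 5 then -s1/qhat
      else 0) :
    (∫ ω, X' ω ∂μ = s2 * (q/(6*qhat) - p/(6*phat))) ∧
    (∫ ω, X ω ∂μ = (s1 - s2) * (p/(6*phat) - q/(6*qhat))) ∧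
    (p/phat ≥ q/qhat → (∫ ω, X' ω ∂μ) ≤ 0 ∧ 0 ≤ ∫ ω, X ω ∂μ) := by
  have hEX' : ∫ ω, X' ω ∂μ = s2 * (q/(6*qhat) - p/(6*phat)) := by
    rw [hX', integral_ite_fin_seven μ hK' hp.le hq.le h0' h1' h2' h3' h4' h5']
    ring
  have hEX : ∫ ω, X ω ∂μ = (s1 - s2) * (p/(6*phat) - q/(6*qhat)) := by
    rw [hX, integral_ite_fin_seven μ hK hp.le hq.le h0 h1 h2 h3 h4 h5]
    ring
  refine ⟨hEX', hEX, fun hmee => ?_⟩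
  have hgap : 0 ≤ p/(6*phat) - q/(6*qhat) := by
    simp only [div_mul_eq_div_div_swap]
    linarith
  rw [hEX', hEX]
  exact ⟨mul_nonpos_of_nonneg_of_nonpos hs2 (by linarith), mul_nonneg (by linarith) hgap⟩

/-- Three-candidate model, voter `v ∈ P₁`, normalized scoring
rule `(s₁, s₂, 0)`.  `X` is the per-neighbor contribution to `ŝ_v(a₁) - ŝ_v(a₂)`
(as in Statement 8) and `X'` the contribution to `ŝ_v(a₃) - ŝ_v(a₂)`, taking
value `-s₂/p̂` w.p. `p/6`; values `(s₁-s₂)/q̂, -(s₁-s₂)/q̂, s₂/q̂, s₁/q̂, -s₁/q̂`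
each w.p. `q/6`; and `0` otherwise.  Then `E[X'] = s₂(q/(6q̂) - p/(6p̂))`, and
under MEE `p/p̂ ≥ q/q̂` we get `E[X'] ≤ 0 ≤ E[X] = (s₁-s₂)(p/(6p̂) - q/(6q̂))`. -/
theorem three_candidates_P1_dominant_false_beating
    {Ω : Type*} [MeasurableSpace Ω] (μ : Measure Ω) [IsProbabilityMeasure μ]
    (p phat q qhat s1 s2 : ℝ)
    (hp : 0 < p) (hp' : p ≤ 1) (hq : 0 < q) (hq' : q ≤ 1)
    (hphat : 0 < phat) (hphat' : phat ≤ 1) (hqhat : 0 < qhat) (hqhat' : qhat ≤ 1)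
    (hs1 : s2 ≤ s1) (hs2 : 0 ≤ s2) (hsum : s1 + s2 = 1)
    (K : Ω → Fin 7) (hK : Measurable K)
    (h0 : μ (K ⁻¹' {0}) = ENNReal.ofReal (p/6))
    (h1 : μ (K ⁻¹' {1}) = ENNReal.ofReal (q/6))
    (h2 : μ (K ⁻¹' {2}) = ENNReal.ofReal (q/6))
    (h3 : μ (K ⁻¹' {3}) = ENNReal.ofReal (q/6))
    (h4 : μ (K ⁻¹' {4}) = ENNReal.ofReal (q/6))
    (h5 : μ (K ⁻¹' {5}) = ENNReal.ofReal (q/6))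
    (X : Ω → ℝ)
    (hX : X = fun ω =>
      if K ω = 0 then (s1 - s2)/phat
      else if K ω = 1 then -(s1 - s2)/qhat
      else if K ω = 2 then s1/qhat
      else if K ω = 3 then -s1/qhat
      else if K ω = 4 then s2/qhat
      else if K ω = 5 then -s2/qhat
      else 0)
    (K' : Ω → Fin 7) (hK' : Measurable K')
    (h0' : μ (K' ⁻¹' {0}) = ENNReal.ofReal (p/6))
    (h1' : μ (K' ⁻¹' {1}) = ENNReal.ofReal (q/6))
    (h2' : μ (K' ⁻¹' {2}) = ENNReal.ofReal (q/6))
    (h3' : μ (K' ⁻¹' {3}) = ENNReal.ofReal (q/6))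
    (h4' : μ (K' ⁻¹' {4}) = ENNReal.ofReal (q/6))
    (h5' : μ (K' ⁻¹' {5}) = ENNReal.ofReal (q/6))
    (X' : Ω → ℝ)
    (hX' : X' = fun ω =>
      if K' ω = 0 then -s2/phat
      else if K' ω = 1 then (s1 - s2)/qhat
      else if K' ω = 2 then -(s1 - s2)/qhat
      else if K' ω = 3 then s2/qhat
      else if K' ω = 4 then s1/qhat
      else if K' ω = 5 then -s1/qhat
      else 0) :
    (∫ ω, X' ω ∂μ = s2 * (q/(6*qhat) - p/(6*phat))) ∧
    (∫ ω, X ω ∂μ = (s1 - s2) * (p/(6*phat) - q/(6*qhat))) ∧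
    (p/phat ≥ q/qhat → (∫ ω, X' ω ∂μ) ≤ 0 ∧ 0 ≤ ∫ ω, X ω ∂μ) :=
  three_candidates_P1_dominant_false_beating_general μ p phat q qhat s1 s2 hp hq hs1 hs2 K hK h0 h1
    h2 h3 h4 h5 X hX K' hK' h0' h1' h2' h3' h4' h5' X' hX'
end

section
/- Define, for real numbers p, p̂, q, q̂ ∈ (0,1] with p/p̂ ≥ q/q̂ and a normalized scoring rule (s_1, s_2, 0) with s_1 ≥ s_2 ≥ 0 and s_1 + s_2 = 1, the normalized mean μ(s_1, s_2) := (s_1 − s_2)·(p/(6p̂) − q/(6q̂)) / sqrt( (s_1 − s_2)²·( p/(6p̂²) + q/(6q̂²) − (p/(6p̂) − q/(6q̂))² ) + (s_1² + s_2²)·q/(3q̂²) ). Then 0 = μ(1/2, 1/2) ≤ μ(2/3, 1/3) ≤ μ(1, 0); i.e., for a voter who ranks the true winner second, the normalized mean of the dominant false-beating score difference is smallest under veto, intermediate under Borda, and largest under plurality, which yields MPFB^Veto ≤ MPFB^Borda ≤ MPFB^Plurality. -/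
/-- For `p, p̂, q, q̂ ∈ (0,1]` with `p/p̂ ≥ q/q̂`, define the
normalized mean
`μ(s₁,s₂) = (s₁-s₂)(p/(6p̂) - q/(6q̂)) / √((s₁-s₂)²(p/(6p̂²)+q/(6q̂²)-(p/(6p̂)-q/(6q̂))²) + (s₁²+s₂²) q/(3q̂²))`.
Then `0 = μ(1/2,1/2) ≤ μ(2/3,1/3) ≤ μ(1,0)`: for a voter ranking the true winner
second, veto has the smallest normalized mean, Borda intermediate, plurality
largest, whence `MPFB^Veto ≤ MPFB^Borda ≤ MPFB^Plurality`. -/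
theorem three_candidates_second_rank_comparison
    (p phat q qhat : ℝ)
    (hp : 0 < p) (hp' : p ≤ 1) (hq : 0 < q) (hq' : q ≤ 1)
    (hphat : 0 < phat) (hphat' : phat ≤ 1) (hqhat : 0 < qhat) (hqhat' : qhat ≤ 1)
    (hmee : p/phat ≥ q/qhat) :
    let μf : ℝ → ℝ → ℝ := fun s1 s2 =>
      (s1 - s2) * (p/(6*phat) - q/(6*qhat)) /
        Real.sqrt ((s1 - s2)^2 * (p/(6*phat^2) + q/(6*qhat^2) -
          (p/(6*phat) - q/(6*qhat))^2) + (s1^2 + s2^2) * q/(3*qhat^2))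
    0 = μf (1/2) (1/2) ∧ μf (1/2) (1/2) ≤ μf (2/3) (1/3) ∧
      μf (2/3) (1/3) ≤ μf 1 0 := by
  intro μf
  set d : ℝ := p/(6*phat) - q/(6*qhat) with hd_def
  have hd : 0 ≤ d := by
    have h1 : q/(6*qhat) ≤ p/(6*phat) := by
      rw [div_le_div_iff₀ (by positivity) (by positivity)]
      rw [ge_iff_le, div_le_div_iff₀ (by positivity) (by positivity)] at hmee
      nlinarith
    simp only [hd_def]; linarith
  set V : ℝ := p/(6*phat^2) + q/(6*qhat^2) - d^2 with hV_def
  have hV : 0 ≤ V := by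
    have ha : (p/(6*phat))^2 ≤ p/(6*phat^2) := by
      rw [div_pow, div_le_div_iff₀ (by positivity) (by positivity)]
      nlinarith [mul_nonneg (mul_nonneg hp.le (sq_nonneg phat)) (by linarith : (0:ℝ) ≤ 1 - p)]
    have hb : (q/(6*qhat))^2 ≤ q/(6*qhat^2) := by
      rw [div_pow, div_le_div_iff₀ (by positivity) (by positivity)]
      nlinarith [mul_nonneg (mul_nonneg hq.le (sq_nonneg qhat)) (by linarith : (0:ℝ) ≤ 1 - q)]
    have hab : 0 ≤ (p/(6*phat)) * (q/(6*qhat)) := by positivity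
    have h2 : d^2 ≤ (p/(6*phat))^2 + (q/(6*qhat))^2 := by
      simp only [hd_def]; nlinarith
    simp only [hV_def]; nlinarith
  set K : ℝ := q/(3*qhat^2) with hK_def
  have hK : 0 < K := by positivity
  have hsqrt9 : Real.sqrt 9 = 3 := by
    rw [show (9:ℝ) = 3^2 by norm_num, Real.sqrt_sq (by norm_num)]
  have hveto : μf (1/2) (1/2) = 0 := by
    simp only [μf]; norm_num
  have hborda : μf (2/3) (1/3) = d / Real.sqrt (V + 5*K) := by
    simp only [μf]
    have h1 : ((2:ℝ)/3 - 1/3)^2 * (p/(6*phat^2) + q/(6*qhat^2) -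
        (p/(6*phat) - q/(6*qhat))^2) + (((2:ℝ)/3)^2 + (1/3)^2) * q/(3*qhat^2)
        = (V + 5*K)/9 := by
      simp only [hV_def, hK_def, hd_def]; ring
    rw [h1, Real.sqrt_div (by linarith), hsqrt9]
    rw [div_div_eq_mul_div, ← hd_def]
    ring_nf
  have hplur : μf 1 0 = d / Real.sqrt (V + K) := by
    simp only [μf]
    have h1 : ((1:ℝ) - 0)^2 * (p/(6*phat^2) + q/(6*qhat^2) -
        (p/(6*phat) - q/(6*qhat))^2) + ((1:ℝ)^2 + 0^2) * q/(3*qhat^2)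
        = V + K := by
      simp only [hV_def, hK_def, hd_def]; ring
    rw [h1, ← hd_def]; ring_nf
  refine ⟨hveto.symm, ?_, ?_⟩
  · rw [hveto, hborda]; positivity
  · rw [hborda, hplur]
    have h1 : Real.sqrt (V + K) ≤ Real.sqrt (V + 5*K) := Real.sqrt_le_sqrt (by linarith)
    have h2 : 0 < Real.sqrt (V + K) := Real.sqrt_pos.mpr (by linarith)
    exact div_le_div_of_nonneg_left hd h2 h1
end

section
/- Define, for real numbers p, p̂, q, q̂ ∈ (0,1] with p/p̂ ≥ q/q̂ and a normalized scoring rule (s_1, s_2, 0) with s_1 > 0, s_1 ≥ s_2 ≥ 0 and s_1 + s_2 = 1, the normalized mean μ₂(s_1, s_2) := s_1·(p/(6p̂) − q/(6q̂)) / sqrt( s_1²·( p/(6p̂²) + q/(6q̂²) − (p/(6p̂) − q/(6q̂))² ) + ((s_1 − s_2)² + s_2²)·q/(3q̂²) ). Then μ₂(1, 0) ≤ μ₂(2/3, 1/3); i.e., for a voter who ranks the true winner last, the normalized mean of the false-beating score difference under Borda is at least that under plurality (and hence, combined with μ₂(1,0) = μ₂(1/2,1/2), MPFB^Veto ≤ MPFB^Borda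 and MPFB^Plurality ≤ MPFB^Borda). -/
/-- For `p, p̂, q, q̂ ∈ (0,1]` with `p/p̂ ≥ q/q̂`, define the
normalized mean
`μ₂(s₁,s₂) = s₁(p/(6p̂) - q/(6q̂)) / √(s₁²(p/(6p̂²)+q/(6q̂²)-(p/(6p̂)-q/(6q̂))²) + ((s₁-s₂)²+s₂²) q/(3q̂²))`.
Then `μ₂(1,0) ≤ μ₂(2/3,1/3)`: for a voter ranking the true winner last, the
normalized mean under Borda is at least that under plurality (and, with
`μ₂(1,0) = μ₂(1/2,1/2)`, `MPFB^Veto ≤ MPFB^Borda` and `MPFB^Plu ≤ MPFB^Borda`). -/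
theorem three_candidates_last_rank_borda_worst
    (p phat q qhat : ℝ)
    (hp : 0 < p) (hp' : p ≤ 1) (hq : 0 < q) (hq' : q ≤ 1)
    (hphat : 0 < phat) (hphat' : phat ≤ 1) (hqhat : 0 < qhat) (hqhat' : qhat ≤ 1)
    (hmee : p/phat ≥ q/qhat) :
    let μ2 : ℝ → ℝ → ℝ := fun s1 s2 =>
      s1 * (p/(6*phat) - q/(6*qhat)) /
        Real.sqrt (s1^2 * (p/(6*phat^2) + q/(6*qhat^2) -
          (p/(6*phat) - q/(6*qhat))^2) + ((s1 - s2)^2 + s2^2) * q/(3*qhat^2))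
    μ2 1 0 ≤ μ2 (2/3) (1/3) := by
  intro μ2
  simp only [μ2]
  set M : ℝ := p/(6*phat) - q/(6*qhat) with hMdef
  set V : ℝ := p/(6*phat^2) + q/(6*qhat^2) - M^2 with hVdef
  set Q : ℝ := q/(3*qhat^2) with hQdef
  have hQpos : 0 < Q := by positivity
  have ha : (0:ℝ) ≤ p/(6*phat) := by positivity
  have hb : (0:ℝ) ≤ q/(6*qhat) := by positivity
  have hM : 0 ≤ M := by
    rw [ge_iff_le, div_le_div_iff₀ hqhat hphat] at hmee
    rw [hMdef, sub_nonneg, div_le_div_iff₀ (by positivity) (by positivity)]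
    nlinarith
  have h2 : (p/(6*phat))^2 ≤ p/(6*phat^2) := by
    have : (p/(6*phat))^2 = p^2/(36*phat^2) := by ring
    rw [this, div_le_div_iff₀ (by positivity) (by positivity)]
    nlinarith [mul_nonneg (mul_nonneg hp.le (sub_nonneg.mpr hp')) (sq_nonneg phat)]
  have h3 : (q/(6*qhat))^2 ≤ q/(6*qhat^2) := by
    have : (q/(6*qhat))^2 = q^2/(36*qhat^2) := by ring
    rw [this, div_le_div_iff₀ (by positivity) (by positivity)]
    nlinarith [mul_nonneg (mul_nonneg hq.le (sub_nonneg.mpr hq')) (sq_nonneg qhat)]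
  have hV : 0 ≤ V := by
    have h1 : M^2 ≤ (p/(6*phat))^2 + (q/(6*qhat))^2 := by
      rw [hMdef]; nlinarith [mul_nonneg ha hb]
    rw [hVdef]; linarith
  clear_value M V Q
  -- rewrite RHS
  have harg1 : (1:ℝ)^2 * V + ((1 - 0)^2 + 0^2) * q/(3*qhat^2) = V + Q := by
    rw [hQdef]; ring
  have harg2 : (2/3:ℝ)^2 * V + ((2/3 - 1/3)^2 + (1/3)^2) * q/(3*qhat^2)
      = (2/3)^2 * (V + Q/2) := by
    rw [hQdef]; ring
  rw [harg1, harg2]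
  have hsq : Real.sqrt ((2/3:ℝ)^2 * (V + Q/2)) = (2/3) * Real.sqrt (V + Q/2) := by
    rw [Real.sqrt_mul (by positivity), Real.sqrt_sq (by norm_num)]
  rw [hsq, one_mul]
  have hBpos : 0 < V + Q/2 := by linarith [hV, hQpos]
  have hAB : V + Q/2 ≤ V + Q := by linarith [hQpos]
  rw [show (2/3:ℝ) * M / ((2/3) * Real.sqrt (V + Q/2)) = M / Real.sqrt (V + Q/2) by
    rw [mul_div_mul_left _ _ (by norm_num : (2/3:ℝ) ≠ 0)]]
  exact div_le_div_of_nonneg_left hM (Real.sqrt_pos.mpr hBpos) (Real.sqrt_le_sqrt hAB)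
end
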